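/- arXiv:1605.08294 — 8 statements merged into one kernel-verified Lean document; each statement's English description precedes it below -/
import Mathlib

section
/- Let p and q be probability mass functions on a countable type Y and let ε, δ ≥ 0. (i) If with probability at least 1−δ over a ∼ p one has |log(p(a)/q(a))| ≤ ε, then p(S) ≤ e^ε·q(S) + δ for every S ⊆ Y. (ii) If in addition with probability at least 1−δ over a ∼ q one has |log(p(a)/q(a))| ≤ ε, then p and q are (ε,δ)-indistinguishable. -/
open scoped ENNReal

/-- Two PMFs are `(ε,δ)`-indistinguishable if each assigns to every set at most
`e^ε` times the mass the other assigns, plus `δ`. -/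
def Indist {Y : Type*} (p q : PMF Y) (ε δ : ℝ) : Prop :=
  ∀ S : Set Y,
    p.toOuterMeasure S ≤ ENNReal.ofReal (Real.exp ε) * q.toOuterMeasure S + ENNReal.ofReal δ ∧
    q.toOuterMeasure S ≤ ENNReal.ofReal (Real.exp ε) * p.toOuterMeasure S + ENNReal.ofReal δ

/-- The pointwise log-ratio privacy loss `log (p a / q a)`, taken in the extended
reals (the ratio `p a / q a` is computed in `ℝ≥0∞`, so `q a = 0` gives `+∞`). -/
noncomputable def ptLoss {Y : Type*} (p q : PMF Y) (a : Y) : EReal :=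
  ENNReal.log (p a / q a)

/-!
On the set `G` where `|log (p a / q a)| ≤ ε` we have `p a ≤ e^ε q a` and `q a ≤ e^ε p a`
pointwise. Summing over `S`, the points of `S ∩ G` contribute at most `e^ε q(S)`, and the
points of `S \ G` at most `p(Gᶜ) ≤ δ`; symmetrically with `p` and `q` exchanged.
-/

namespace ENNReal

lemma one_sub_ofReal_one_sub_le (δ : ℝ) : 1 - ENNReal.ofReal (1 - δ) ≤ ENNReal.ofReal δ :=
  tsub_le_iff_right.2 <| by simpa using ofReal_add_le (p := δ) (q := 1 - δ)

-- Not an equality: for `x = y = 0` the left side is `0` and the right side `⊤`.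
lemma div_le_inv_div (x y : ℝ≥0∞) : y / x ≤ (x / y)⁻¹ := by
  rw [ENNReal.le_inv_iff_mul_le]
  calc y / x * (x / y) = y * y⁻¹ * (x * x⁻¹) := by simp only [div_eq_mul_inv]; ring
    _ ≤ 1 := mul_le_one' (ENNReal.mul_inv_le_one y) (ENNReal.mul_inv_le_one x)

lemma le_ofReal_exp_mul_of_log_div_le {x y : ℝ≥0∞} {ε : ℝ} (h : log (x / y) ≤ ε) :
    x ≤ ENNReal.ofReal (Real.exp ε) * y := by
  rw [← Real.log_exp ε, ← ENNReal.log_ofReal_of_pos (Real.exp_pos ε), log_le_log_iff] at h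
  exact (ENNReal.div_le_iff_le_mul (Or.inr ofReal_ne_top)
    (Or.inr (ofReal_pos.2 (Real.exp_pos ε)).ne')).1 h

lemma le_ofReal_exp_mul_of_neg_log_div_le {x y : ℝ≥0∞} {ε : ℝ} (h : -log (x / y) ≤ ε) :
    y ≤ ENNReal.ofReal (Real.exp ε) * x :=
  le_ofReal_exp_mul_of_log_div_le <| (log_monotone (div_le_inv_div x y)).trans (by rwa [log_inv])

end ENNReal

namespace PMF

variable {α : Type*} (p q : PMF α)

lemma toOuterMeasure_add_compl (s : Set α) : p.toOuterMeasure s + p.toOuterMeasure sᶜ = 1 := by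
  rw [toOuterMeasure_apply, toOuterMeasure_apply, ← ENNReal.tsum_add, ← p.tsum_coe]
  exact tsum_congr fun a => congrFun (s.indicator_self_add_compl p) a

lemma toOuterMeasure_compl_le_of_ofReal_one_sub_le {s : Set α} {δ : ℝ}
    (hs : ENNReal.ofReal (1 - δ) ≤ p.toOuterMeasure s) :
    p.toOuterMeasure sᶜ ≤ ENNReal.ofReal δ :=
  have hs_ne_top : p.toOuterMeasure s ≠ ⊤ :=
    ne_top_of_le_ne_top ENNReal.one_ne_top (le_self_add.trans (p.toOuterMeasure_add_compl s).le)
  calc p.toOuterMeasure sᶜ = 1 - p.toOuterMeasure s := by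
        rw [← p.toOuterMeasure_add_compl s, ENNReal.add_sub_cancel_left hs_ne_top]
    _ ≤ 1 - ENNReal.ofReal (1 - δ) := tsub_le_tsub_left hs 1
    _ ≤ ENNReal.ofReal δ := ENNReal.one_sub_ofReal_one_sub_le δ

lemma toOuterMeasure_le_mul_add_compl {c : ℝ≥0∞} {s : Set α}
    (h : ∀ a ∈ s, p a ≤ c * q a) (t : Set α) :
    p.toOuterMeasure t ≤ c * q.toOuterMeasure t + p.toOuterMeasure sᶜ := by
  simp only [toOuterMeasure_apply]
  rw [← ENNReal.tsum_mul_left, ← ENNReal.tsum_add]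
  refine ENNReal.tsum_le_tsum fun a => ?_
  by_cases ha : a ∈ s
  · refine le_add_right ?_
    by_cases hat : a ∈ t
    · simpa only [Set.indicator_of_mem hat] using h a ha
    · simp [Set.indicator_of_notMem hat]
  · calc t.indicator p a ≤ p a := t.indicator_le_self p a
      _ = sᶜ.indicator p a := (Set.indicator_of_mem (Set.mem_compl ha) _).symm
      _ ≤ _ := le_add_self

lemma toOuterMeasure_le_mul_add_ofReal {c : ℝ≥0∞} {s : Set α} {δ : ℝ}
    (h : ∀ a ∈ s, p a ≤ c * q a) (hs : ENNReal.ofReal (1 - δ) ≤ p.toOuterMeasure s)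
    (t : Set α) : p.toOuterMeasure t ≤ c * q.toOuterMeasure t + ENNReal.ofReal δ :=
  (p.toOuterMeasure_le_mul_add_compl q h t).trans
    (add_le_add_right (p.toOuterMeasure_compl_le_of_ofReal_one_sub_le hs) _)

end PMF

theorem pointwise_indistinguishable_implies_indistinguishable_general
    {Y : Type*} (p q : PMF Y) (ε δ : ℝ) :
    (ENNReal.ofReal (1 - δ) ≤
        p.toOuterMeasure {a | max (ptLoss p q a) (-(ptLoss p q a)) ≤ (ε : EReal)} →
      ∀ S : Set Y,
        p.toOuterMeasure S ≤ ENNReal.ofReal (Real.exp ε) * q.toOuterMeasure S +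
          ENNReal.ofReal δ) ∧
    (ENNReal.ofReal (1 - δ) ≤
        p.toOuterMeasure {a | max (ptLoss p q a) (-(ptLoss p q a)) ≤ (ε : EReal)} →
      ENNReal.ofReal (1 - δ) ≤
        q.toOuterMeasure {a | max (ptLoss p q a) (-(ptLoss p q a)) ≤ (ε : EReal)} →
      Indist p q ε δ) := by
  set G : Set Y := {a | max (ptLoss p q a) (-(ptLoss p q a)) ≤ (ε : EReal)}
  have hpq : ∀ a ∈ G, p a ≤ ENNReal.ofReal (Real.exp ε) * q a := fun _ ha =>
    ENNReal.le_ofReal_exp_mul_of_log_div_le ((le_max_left _ _).trans ha)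
  have hqp : ∀ a ∈ G, q a ≤ ENNReal.ofReal (Real.exp ε) * p a := fun _ ha =>
    ENNReal.le_ofReal_exp_mul_of_neg_log_div_le ((le_max_right _ _).trans ha)
  exact ⟨p.toOuterMeasure_le_mul_add_ofReal q hpq, fun hp hq S =>
    ⟨p.toOuterMeasure_le_mul_add_ofReal q hpq hp S,
      q.toOuterMeasure_le_mul_add_ofReal p hqp hq S⟩⟩

/-- (i) If with probability at least `1 - δ` over `a ∼ p` we have
`|log (p a / q a)| ≤ ε`, then `p S ≤ e^ε · q S + δ` for every `S`.
(ii) If moreover the same holds with probability at least `1 - δ` over `a ∼ q`,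
then `p` and `q` are `(ε,δ)`-indistinguishable. -/
theorem pointwise_indistinguishable_implies_indistinguishable
    {Y : Type*} [Countable Y] (p q : PMF Y) (ε δ : ℝ) (hε : 0 ≤ ε) (hδ : 0 ≤ δ) :
    (ENNReal.ofReal (1 - δ) ≤
        p.toOuterMeasure {a | max (ptLoss p q a) (-(ptLoss p q a)) ≤ (ε : EReal)} →
      ∀ S : Set Y,
        p.toOuterMeasure S ≤ ENNReal.ofReal (Real.exp ε) * q.toOuterMeasure S +
          ENNReal.ofReal δ) ∧
    (ENNReal.ofReal (1 - δ) ≤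
        p.toOuterMeasure {a | max (ptLoss p q a) (-(ptLoss p q a)) ≤ (ε : EReal)} →
      ENNReal.ofReal (1 - δ) ≤
        q.toOuterMeasure {a | max (ptLoss p q a) (-(ptLoss p q a)) ≤ (ε : EReal)} →
      Indist p q ε δ) :=
  pointwise_indistinguishable_implies_indistinguishable_general p q ε δ
end

section
/- Post-processing preserves indistinguishability: let μ and ν be probability measures on a measurable space α, let κ be a Markov kernel from α to a measurable space β, and let ε, δ ≥ 0. If μ(S) ≤ e^ε·ν(S) + δ for every measurable S ⊆ α, then the pushforward measures satisfy (μ bind κ)(T) ≤ e^ε·(ν bind κ)(T) + δ for every measurable T ⊆ β, where (μ bind κ)(T) = ∫ κ(x)(T) dμ(x). -/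
/-!
By the layer cake formula, `∫⁻ f dμ = ∫₀¹ μ {f ≥ t} dt` for a measurable `f` with values in
`[0, 1]`, and the hypothesis applies to each superlevel set `{f ≥ t}`; integrating over
`t ∈ (0, 1]` turns it into `∫⁻ f dμ ≤ e^ε ∫⁻ f dν + δ`. Taking `f x = κ x T` gives the claim.
-/

open MeasureTheory ProbabilityTheory Set
open scoped ENNReal

section LayerCake

variable {α : Type*} [MeasurableSpace α]

theorem lintegral_ofReal_eq_setLIntegral_Ioc_meas_le (μ : Measure α) {f : α → ℝ} {M : ℝ}
    (hf : Measurable f) (hf_nonneg : ∀ x, 0 ≤ f x) (hf_le : ∀ x, f x ≤ M) :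
    ∫⁻ x, ENNReal.ofReal (f x) ∂μ = ∫⁻ t in Ioc 0 M, μ {x | t ≤ f x} := by
  have hsupp : (fun t => μ {x | t ≤ f x}).support ⊆ Iic M := fun t ht => by
    obtain ⟨x, hx⟩ := nonempty_of_measure_ne_zero ht
    exact le_trans hx (hf_le x)
  rw [lintegral_eq_lintegral_meas_le μ (ae_of_all _ hf_nonneg) hf.aemeasurable,
    ← setLIntegral_eq_of_support_subset hsupp, Measure.restrict_restrict measurableSet_Iic,
    Iic_inter_Ioi]

theorem lintegral_le_mul_lintegral_add_of_forall_measure_le {μ ν : Measure α} {c d : ℝ≥0∞}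
    (h : ∀ S, MeasurableSet S → μ S ≤ c * ν S + d) {f : α → ℝ≥0∞} (hf : Measurable f)
    (hf_le : ∀ x, f x ≤ 1) :
    ∫⁻ x, f x ∂μ ≤ c * ∫⁻ x, f x ∂ν + d := by
  obtain ⟨g, hg, hg_nonneg, hg_le, rfl⟩ : ∃ g : α → ℝ, Measurable g ∧ (∀ x, 0 ≤ g x) ∧
      (∀ x, g x ≤ 1) ∧ f = fun x => ENNReal.ofReal (g x) :=
    ⟨fun x => (f x).toReal, hf.ennreal_toReal, fun x => ENNReal.toReal_nonneg,
      fun x => ENNReal.toReal_le_of_le_ofReal zero_le_one (by simpa using hf_le x),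
      funext fun x => (ENNReal.ofReal_toReal (ne_top_of_le_ne_top ENNReal.one_ne_top (hf_le x))).symm⟩
  have layer_cake (m : Measure α) :=
    lintegral_ofReal_eq_setLIntegral_Ioc_meas_le m hg hg_nonneg hg_le
  have hν_anti : Antitone fun t => ν {x | t ≤ g x} :=
    fun _ _ hst => measure_mono fun _ hx => le_trans hst hx
  rw [layer_cake, layer_cake]
  calc ∫⁻ t in Ioc 0 1, μ {x | t ≤ g x}
      ≤ ∫⁻ t in Ioc 0 1, (c * ν {x | t ≤ g x} + d) :=
        lintegral_mono fun t => h _ (measurableSet_le measurable_const hg)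
    _ = c * (∫⁻ t in Ioc 0 1, ν {x | t ≤ g x}) + d := by
        rw [lintegral_add_right _ measurable_const, lintegral_const_mul _ hν_anti.measurable,
          setLIntegral_const, Real.volume_Ioc, sub_zero, ENNReal.ofReal_one, mul_one]

end LayerCake

theorem postprocessing_preserves_indistinguishability_general
    {α β : Type*} [MeasurableSpace α] [MeasurableSpace β]
    (μ ν : Measure α)
    (κ : Kernel α β) [IsMarkovKernel κ]
    (ε δ : ℝ)
    (h : ∀ S : Set α, MeasurableSet S →
      μ S ≤ ENNReal.ofReal (Real.exp ε) * ν S + ENNReal.ofReal δ) :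
    ∀ T : Set β, MeasurableSet T →
      (μ.bind fun x => κ x) T ≤
        ENNReal.ofReal (Real.exp ε) * ((ν.bind fun x => κ x) T) + ENNReal.ofReal δ := by
  intro T hT
  rw [Measure.bind_apply hT κ.aemeasurable, Measure.bind_apply hT κ.aemeasurable]
  exact lintegral_le_mul_lintegral_add_of_forall_measure_le h (κ.measurable_coe hT)
    fun x => prob_le_one

/-- Post-processing preserves indistinguishability: if `μ S ≤ e^ε · ν S + δ` for every
measurable `S`, then for any Markov kernel `κ`, the pushforwards satisfy
`(μ bind κ) T ≤ e^ε · (ν bind κ) T + δ` for every measurable `T`. -/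
theorem postprocessing_preserves_indistinguishability
    {α β : Type*} [MeasurableSpace α] [MeasurableSpace β]
    (μ ν : Measure α) [IsProbabilityMeasure μ] [IsProbabilityMeasure ν]
    (κ : Kernel α β) [IsMarkovKernel κ]
    (ε δ : ℝ) (hε : 0 ≤ ε) (hδ : 0 ≤ δ)
    (h : ∀ S : Set α, MeasurableSet S →
      μ S ≤ ENNReal.ofReal (Real.exp ε) * ν S + ENNReal.ofReal δ) :
    ∀ T : Set β, MeasurableSet T →
      (μ.bind fun x => κ x) T ≤
        ENNReal.ofReal (Real.exp ε) * ((ν.bind fun x => κ x) T) + ENNReal.ofReal δ :=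
  postprocessing_preserves_indistinguishability_general μ ν κ ε δ h
end

section
/- Simulation of indistinguishable pairs by randomized response (Kairouz–Oh–Viswanath): let ε, δ ≥ 0 and let p₀ and p₁ be PMFs on a countable type Y that are (ε,δ)-indistinguishable. Then there exists a map T assigning to each element of {0,⊤,⊥,1} a PMF on Y such that for each b ∈ {0,1}, the PMF obtained by sampling z ∼ RR_{ε,δ}(b) and then sampling from T(z) (i.e., the monadic bind of RR_{ε,δ}(b) along T) equals p_b. -/
/-!
Put `K = e^ε`. Applying indistinguishability to the set `{K p₁ < p₀}` shows that
`min (p₀, K p₁)` has mass at least `1 - δ`, and symmetrically for `min (p₁, K p₀)`. These two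
densities are within a factor `K` of each other pointwise, and they can be shrunk to mass
exactly `1 - δ` keeping that property. This writes `pᵢ = δ tᵢ + (1 - δ) qᵢ` with `q₀, q₁` pure
`ε`-indistinguishable. Such a pair is binary randomized response post-processed by
`f = (K q₀ - q₁) / (K - 1)` and `g = (K q₁ - q₀) / (K - 1)`, so `T` sends `0, ⊤, ⊥, 1` to
`t₀, f, g, t₁`.
-/

open scoped ENNReal

/-- The four-element output type `{0, ⊤, ⊥, 1}` of randomized response. -/
inductive RROut : Type
  | zero : RROut
  | top : RROut
  | bot : RROut
  | one : RROut

/-- A PMF `r` on `{0,⊤,⊥,1}` is the randomized response distribution `RR_{ε,δ}(0)`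
if it has the prescribed four masses. -/
def IsRR0 (ε δ : ℝ) (r : PMF RROut) : Prop :=
  r RROut.zero = ENNReal.ofReal δ ∧
  r RROut.top = ENNReal.ofReal ((1 - δ) * (Real.exp ε / (1 + Real.exp ε))) ∧
  r RROut.bot = ENNReal.ofReal ((1 - δ) * (1 / (1 + Real.exp ε))) ∧
  r RROut.one = 0

/-- A PMF `r` on `{0,⊤,⊥,1}` is the randomized response distribution `RR_{ε,δ}(1)`
if it has the prescribed four masses. -/
def IsRR1 (ε δ : ℝ) (r : PMF RROut) : Prop :=
  r RROut.zero = 0 ∧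
  r RROut.top = ENNReal.ofReal ((1 - δ) * (1 / (1 + Real.exp ε))) ∧
  r RROut.bot = ENNReal.ofReal ((1 - δ) * (Real.exp ε / (1 + Real.exp ε))) ∧
  r RROut.one = ENNReal.ofReal δ

def RROut.equivFin : RROut ≃ Fin 4 where
  toFun
    | .zero => 0
    | .top => 1
    | .bot => 2
    | .one => 3
  invFun := ![.zero, .top, .bot, .one]
  left_inv z := by cases z <;> rfl
  right_inv i := by fin_cases i <;> rfl

lemma RROut.tsum_eq {M : Type*} [AddCommMonoid M] [TopologicalSpace M] (F : RROut → M) :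
    ∑' z, F z = F .zero + F .top + F .bot + F .one := by
  rw [← RROut.equivFin.symm.tsum_eq, tsum_fintype, Fin.sum_univ_four]
  rfl

lemma PMF.toReal_bind_apply {α β : Type*} (p : PMF α) (f : α → PMF β) (b : β) :
    (p.bind f b).toReal = ∑' a, (p a).toReal * (f a b).toReal := by
  rw [PMF.bind_apply,
    ENNReal.tsum_toReal_eq fun a => ENNReal.mul_ne_top (p.apply_ne_top a) ((f a).apply_ne_top b)]
  simp only [ENNReal.toReal_mul]

section

variable {Y : Type*}

lemma PMF.hasSum_toReal (p : PMF Y) : HasSum (fun y => (p y).toReal) 1 := by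
  have := ENNReal.hasSum_toReal (p.tsum_coe ▸ ENNReal.one_ne_top)
  rwa [← ENNReal.tsum_toReal_eq p.apply_ne_top, p.tsum_coe, ENNReal.toReal_one] at this

lemma PMF.exists_eq_mul_toReal [Nonempty Y] {h : Y → ℝ} {s : ℝ} (h0 : ∀ y, 0 ≤ h y)
    (hs : HasSum h s) :
    ∃ r : PMF Y, ∀ y, h y = s * (r y).toReal := by
  rcases (hs.nonneg h0).eq_or_lt with rfl | hpos
  · refine ⟨PMF.pure (Classical.arbitrary Y), fun y => ?_⟩
    rw [(hasSum_zero_iff_of_nonneg h0).1 hs, zero_mul]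
    rfl
  · have h1 : HasSum (fun y => (h y / s).toNNReal) 1 := by
      simpa [hpos.ne'] using (hs.div_const s).toNNReal fun y => div_nonneg (h0 y) hpos.le
    refine ⟨⟨fun y => (h y / s).toNNReal, by
      rw [← ENNReal.coe_one]; exact ENNReal.hasSum_coe.2 h1⟩, fun y => ?_⟩
    change h y = s * ((h y / s).toNNReal : ℝ)
    rw [Real.coe_toNNReal _ (div_nonneg (h0 y) hpos.le)]
    field_simp

lemma PMF.one_le_tsum_min_add {p q : PMF Y} {K d : ℝ≥0∞}
    (h : ∀ S, p.toOuterMeasure S ≤ K * q.toOuterMeasure S + d) :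
    1 ≤ ∑' y, min (p y) (K * q y) + d := by
  set S := {y | K * q y < p y}
  have hmin : ∀ y, min (p y) (K * q y) = K * S.indicator q y + Sᶜ.indicator p y := by
    intro y
    by_cases hy : K * q y < p y
    · simp [S, hy, min_eq_right hy.le]
    · simp [S, hy, min_eq_left (not_lt.1 hy)]
  calc 1 = ∑' y, (S.indicator p y + Sᶜ.indicator p y) := by
        simp only [Set.indicator_self_add_compl_apply, p.tsum_coe]
    _ = p.toOuterMeasure S + p.toOuterMeasure Sᶜ := by
        rw [ENNReal.tsum_add, PMF.toOuterMeasure_apply, PMF.toOuterMeasure_apply]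
    _ ≤ K * q.toOuterMeasure S + d + p.toOuterMeasure Sᶜ := add_le_add_left (h S) _
    _ = ∑' y, min (p y) (K * q y) + d := by
        simp only [hmin, ENNReal.tsum_add, ENNReal.tsum_mul_left, PMF.toOuterMeasure_apply]
        ring

lemma PMF.one_sub_le_tsum_min_toReal {p q : PMF Y} {K d : ℝ} (hK : 0 ≤ K) (hd : 0 ≤ d)
    (h : ∀ S, p.toOuterMeasure S ≤ ENNReal.ofReal K * q.toOuterMeasure S + ENNReal.ofReal d) :
    1 - d ≤ ∑' y, min (p y).toReal (K * (q y).toReal) := by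
  have hfin : ∀ y, min (p y) (ENNReal.ofReal K * q y) ≠ ∞ :=
    fun y => ne_top_of_le_ne_top (p.apply_ne_top y) (min_le_left _ _)
  have hsum : ∑' y, min (p y) (ENNReal.ofReal K * q y) ≠ ∞ :=
    ne_top_of_le_ne_top (p.tsum_coe ▸ ENNReal.one_ne_top)
      (ENNReal.tsum_le_tsum fun y => min_le_left _ _)
  have := ENNReal.toReal_mono (by finiteness) (one_le_tsum_min_add h)
  rw [ENNReal.toReal_add hsum ENNReal.ofReal_ne_top, ENNReal.tsum_toReal_eq hfin,
    ENNReal.toReal_ofReal hd, ENNReal.toReal_one] at this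
  simp only [ENNReal.toReal_min (p.apply_ne_top _) (ENNReal.mul_ne_top ENNReal.ofReal_ne_top
    (q.apply_ne_top _)), ENNReal.toReal_mul, ENNReal.toReal_ofReal hK] at this
  linarith

def RatioBounded (K : ℝ) (f g : Y → ℝ) : Prop :=
  ∀ y, f y ≤ K * g y ∧ g y ≤ K * f y

lemma RatioBounded.symm {K : ℝ} {f g : Y → ℝ} (h : RatioBounded K f g) : RatioBounded K g f :=
  fun y => (h y).symm

lemma ratioBounded_min {K : ℝ} (hK : 1 ≤ K) {f g : Y → ℝ} (hf : 0 ≤ f) (hg : 0 ≤ g) :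
    RatioBounded K (fun y => min (f y) (K * g y)) (fun y => min (g y) (K * f y)) := by
  have key : ∀ a b : ℝ, 0 ≤ a → min a (K * b) ≤ K * min b (K * a) := by
    intro a b ha
    rw [mul_min_of_nonneg _ _ (by linarith)]
    refine le_min (min_le_right _ _) ((min_le_left _ _).trans ?_)
    calc a ≤ K * a := le_mul_of_one_le_left ha hK
      _ ≤ K * (K * a) := le_mul_of_one_le_left (by positivity) hK
  exact fun y => ⟨key _ _ (hf y), key _ _ (hg y)⟩

lemma exists_between_hasSum {L U : Y → ℝ} {a b s : ℝ} (hLU : L ≤ U) (hL : HasSum L a)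
    (hU : HasSum U b) (has : a ≤ s) (hsb : s ≤ b) :
    ∃ H, L ≤ H ∧ H ≤ U ∧ HasSum H s := by
  set θ := (s - a) / (b - a)
  have hθ0 : 0 ≤ θ := div_nonneg (by linarith) (by linarith)
  have hθ1 : θ ≤ 1 := div_le_one_of_le₀ (by linarith) (by linarith)
  refine ⟨fun y => L y + θ * (U y - L y), fun y => ?_, fun y => ?_, ?_⟩
  · nlinarith [hLU y]
  · nlinarith [hLU y]
  · convert hL.add ((hU.sub hL).mul_left θ) using 1
    rw [div_mul_cancel_of_imp fun h => by linarith]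
    ring

lemma RatioBounded.exists_le_hasSum {K a b c : ℝ} {u v : Y → ℝ} (h : RatioBounded K u v)
    (hK : 1 ≤ K) (hu : 0 ≤ u) (hv : 0 ≤ v) (ha : HasSum u a) (hb : HasSum v b) (hc : 0 ≤ c)
    (hca : c ≤ a) (hcb : c ≤ b) :
    ∃ H₀ H₁ : Y → ℝ, 0 ≤ H₀ ∧ 0 ≤ H₁ ∧ H₀ ≤ u ∧ H₁ ≤ v ∧ RatioBounded K H₀ H₁ ∧
      HasSum H₀ c ∧ HasSum H₁ c := by
  wlog hba : b ≤ a generalizing u v a b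
  · obtain ⟨H₁, H₀, h₁, h₀, h₁v, h₀u, hH, hs₁, hs₀⟩ :=
      this h.symm hv hu hb ha hcb hca (by linarith)
    exact ⟨H₀, H₁, h₀, h₁, h₀u, h₁v, hH.symm, hs₀, hs₁⟩
  -- Scale `v` to mass `c`; `H₀` is then found between `H₁ / K` and the same scaling of `u`.
  set ρ := c / b
  have hρ0 : 0 ≤ ρ := div_nonneg hc (hc.trans hcb)
  have hρ1 : ρ ≤ 1 := div_le_one_of_le₀ hcb (hc.trans hcb)
  have hρb : ρ * b = c := div_mul_cancel_of_imp fun hb0 => by linarith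
  have hK0 : 0 < K := by linarith
  have hH₁ : HasSum (fun y => ρ * v y) c := hρb ▸ hb.mul_left ρ
  obtain ⟨H₀, hLH, hHU, hH₀⟩ := exists_between_hasSum (s := c)
    (L := fun y => K⁻¹ * (ρ * v y)) (U := fun y => ρ * u y)
    (fun y => by
      rw [inv_mul_le_iff₀ hK0]
      nlinarith [(h y).2])
    (hH₁.mul_left K⁻¹) (ha.mul_left ρ)
    ((inv_mul_le_iff₀ hK0).2 (le_mul_of_one_le_left hc hK))
    (hρb ▸ mul_le_mul_of_nonneg_left hba hρ0)
  refine ⟨H₀, fun y => ρ * v y, fun y => ?_, fun y => mul_nonneg hρ0 (hv y), fun y => ?_,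
    fun y => ?_, fun y => ⟨?_, ?_⟩, hH₀, hH₁⟩
  · exact (mul_nonneg (inv_nonneg.2 hK0.le) (mul_nonneg hρ0 (hv y))).trans (hLH y)
  · exact (hHU y).trans (mul_le_of_le_one_left (hu y) hρ1)
  · exact mul_le_of_le_one_left (hv y) hρ1
  · calc H₀ y ≤ ρ * u y := hHU y
      _ ≤ ρ * (K * v y) := mul_le_mul_of_nonneg_left (h y).1 hρ0
      _ = K * (ρ * v y) := by ring
  · have := hLH y
    rw [inv_mul_le_iff₀ hK0] at this
    exact this

lemma exists_ratioBounded_le_of_one_sub_le {K δ : ℝ} {P₀ P₁ : Y → ℝ} (hK : 1 ≤ K) (hδ : δ ≤ 1)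
    (h₀ : 0 ≤ P₀) (h₁ : 0 ≤ P₁) (hs₀ : Summable P₀) (hs₁ : Summable P₁)
    (hm₀ : 1 - δ ≤ ∑' y, min (P₀ y) (K * P₁ y)) (hm₁ : 1 - δ ≤ ∑' y, min (P₁ y) (K * P₀ y)) :
    ∃ H₀ H₁ : Y → ℝ, 0 ≤ H₀ ∧ 0 ≤ H₁ ∧ H₀ ≤ P₀ ∧ H₁ ≤ P₁ ∧ RatioBounded K H₀ H₁ ∧
      HasSum H₀ (1 - δ) ∧ HasSum H₁ (1 - δ) := by
  have hK0 : 0 ≤ K := by linarith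
  have hu : ∀ y, 0 ≤ min (P₀ y) (K * P₁ y) := fun y => le_min (h₀ y) (mul_nonneg hK0 (h₁ y))
  have hv : ∀ y, 0 ≤ min (P₁ y) (K * P₀ y) := fun y => le_min (h₁ y) (mul_nonneg hK0 (h₀ y))
  obtain ⟨H₀, H₁, hH₀, hH₁, hH₀u, hH₁v, hH, hs₀', hs₁'⟩ :=
    (ratioBounded_min hK h₀ h₁).exists_le_hasSum hK hu hv
      (hs₀.of_nonneg_of_le hu fun y => min_le_left _ _).hasSum
      (hs₁.of_nonneg_of_le hv fun y => min_le_left _ _).hasSum (by linarith) hm₀ hm₁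
  exact ⟨H₀, H₁, hH₀, hH₁, fun y => (hH₀u y).trans (min_le_left _ _),
    fun y => (hH₁v y).trans (min_le_left _ _), hH, hs₀', hs₁'⟩

lemma Indist.exists_decomposition {p₀ p₁ : PMF Y} {ε δ : ℝ} (h : Indist p₀ p₁ ε δ) (hε : 0 ≤ ε)
    (hδ0 : 0 ≤ δ) (hδ1 : δ ≤ 1) :
    ∃ t₀ t₁ q₀ q₁ : PMF Y,
      RatioBounded (Real.exp ε) (fun y => (q₀ y).toReal) (fun y => (q₁ y).toReal) ∧
      ∀ y, (p₀ y).toReal = δ * (t₀ y).toReal + (1 - δ) * (q₀ y).toReal ∧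
        (p₁ y).toReal = δ * (t₁ y).toReal + (1 - δ) * (q₁ y).toReal := by
  have hK : 1 ≤ Real.exp ε := Real.one_le_exp hε
  rcases hδ1.eq_or_lt with rfl | hδ1
  · have hle : ∀ y, (p₀ y).toReal ≤ Real.exp ε * (p₀ y).toReal :=
      fun y => le_mul_of_one_le_left ENNReal.toReal_nonneg hK
    exact ⟨p₀, p₁, p₀, p₀, fun y => ⟨hle y, hle y⟩, fun y => by simp⟩
  have : Nonempty Y := ⟨p₀.support_nonempty.some⟩
  obtain ⟨H₀, H₁, hH₀, hH₁, hH₀p, hH₁p, hH, hs₀, hs₁⟩ :=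
    exists_ratioBounded_le_of_one_sub_le hK hδ1.le (fun y => ENNReal.toReal_nonneg)
      (fun y => ENNReal.toReal_nonneg) p₀.hasSum_toReal.summable p₁.hasSum_toReal.summable
      (PMF.one_sub_le_tsum_min_toReal (Real.exp_pos ε).le hδ0 fun S => (h S).1)
      (PMF.one_sub_le_tsum_min_toReal (Real.exp_pos ε).le hδ0 fun S => (h S).2)
  obtain ⟨t₀, ht₀⟩ := PMF.exists_eq_mul_toReal (fun y => sub_nonneg.2 (hH₀p y))
    (by simpa using p₀.hasSum_toReal.sub hs₀)
  obtain ⟨t₁, ht₁⟩ := PMF.exists_eq_mul_toReal (fun y => sub_nonneg.2 (hH₁p y))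
    (by simpa using p₁.hasSum_toReal.sub hs₁)
  obtain ⟨q₀, hq₀⟩ := PMF.exists_eq_mul_toReal hH₀ hs₀
  obtain ⟨q₁, hq₁⟩ := PMF.exists_eq_mul_toReal hH₁ hs₁
  have hc : 0 < 1 - δ := by linarith
  refine ⟨t₀, t₁, q₀, q₁, fun y => ⟨?_, ?_⟩, fun y => ⟨?_, ?_⟩⟩
  · refine le_of_mul_le_mul_left ?_ hc
    beta_reduce
    linear_combination (hH y).1 - hq₀ y + Real.exp ε * hq₁ y
  · refine le_of_mul_le_mul_left ?_ hc
    beta_reduce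
    linear_combination (hH y).2 - hq₁ y + Real.exp ε * hq₀ y
  · linarith [ht₀ y, hq₀ y]
  · linarith [ht₁ y, hq₁ y]

lemma RatioBounded.exists_binary_mixture {K : ℝ} {q₀ q₁ : PMF Y} (hK : 1 ≤ K)
    (h : RatioBounded K (fun y => (q₀ y).toReal) (fun y => (q₁ y).toReal)) :
    ∃ f g : PMF Y, ∀ y, (1 + K) * (q₀ y).toReal = K * (f y).toReal + (g y).toReal ∧
      (1 + K) * (q₁ y).toReal = (f y).toReal + K * (g y).toReal := by
  rcases hK.eq_or_lt with rfl | hK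
  · refine ⟨q₀, q₀, fun y => ⟨by ring, ?_⟩⟩
    linarith [(h y).1, (h y).2]
  have : Nonempty Y := ⟨q₀.support_nonempty.some⟩
  obtain ⟨f, hf⟩ := PMF.exists_eq_mul_toReal (fun y => sub_nonneg.2 (h y).2)
    ((q₀.hasSum_toReal.mul_left K).sub q₁.hasSum_toReal)
  obtain ⟨g, hg⟩ := PMF.exists_eq_mul_toReal (fun y => sub_nonneg.2 (h y).1)
    ((q₁.hasSum_toReal.mul_left K).sub q₀.hasSum_toReal)
  have hK1 : K - 1 ≠ 0 := sub_ne_zero.2 hK.ne'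
  exact ⟨f, g, fun y => ⟨mul_left_cancel₀ hK1 (by linear_combination K * hf y + hg y),
    mul_left_cancel₀ hK1 (by linear_combination hf y + K * hg y)⟩⟩

lemma IsRR0.toReal_bind_apply {ε δ : ℝ} {r : PMF RROut} (hr : IsRR0 ε δ r) (hδ0 : 0 ≤ δ)
    (hδ1 : δ ≤ 1) (T : RROut → PMF Y) (y : Y) :
    (r.bind T y).toReal = δ * (T .zero y).toReal +
      (1 - δ) * ((Real.exp ε * (T .top y).toReal + (T .bot y).toReal) / (1 + Real.exp ε)) := by
  obtain ⟨h0, htop, hbot, h1⟩ := hr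
  have hc : 0 ≤ 1 - δ := by linarith
  rw [PMF.toReal_bind_apply, RROut.tsum_eq, h0, htop, hbot, h1,
    ENNReal.toReal_ofReal hδ0, ENNReal.toReal_ofReal (by positivity),
    ENNReal.toReal_ofReal (by positivity), ENNReal.toReal_zero]
  ring

lemma IsRR1.toReal_bind_apply {ε δ : ℝ} {r : PMF RROut} (hr : IsRR1 ε δ r) (hδ0 : 0 ≤ δ)
    (hδ1 : δ ≤ 1) (T : RROut → PMF Y) (y : Y) :
    (r.bind T y).toReal = δ * (T .one y).toReal +
      (1 - δ) * (((T .top y).toReal + Real.exp ε * (T .bot y).toReal) / (1 + Real.exp ε)) := by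
  obtain ⟨h0, htop, hbot, h1⟩ := hr
  have hc : 0 ≤ 1 - δ := by linarith
  rw [PMF.toReal_bind_apply, RROut.tsum_eq, h0, htop, hbot, h1,
    ENNReal.toReal_ofReal hδ0, ENNReal.toReal_ofReal (by positivity),
    ENNReal.toReal_ofReal (by positivity), ENNReal.toReal_zero]
  ring

end

theorem kov_randomized_response_simulation_general
    {Y : Type*} (ε δ : ℝ) (hε : 0 ≤ ε) (hδ0 : 0 ≤ δ) (hδ1 : δ ≤ 1)
    (p0 p1 : PMF Y) (hind : Indist p0 p1 ε δ)
    (r0 r1 : PMF RROut) (hr0 : IsRR0 ε δ r0) (hr1 : IsRR1 ε δ r1) :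
    ∃ T : RROut → PMF Y, r0.bind T = p0 ∧ r1.bind T = p1 := by
  obtain ⟨t₀, t₁, q₀, q₁, hq, hp⟩ := hind.exists_decomposition hε hδ0 hδ1
  obtain ⟨f, g, hfg⟩ := hq.exists_binary_mixture (Real.one_le_exp hε)
  have hK : 1 + Real.exp ε ≠ 0 := by positivity
  refine ⟨fun | .zero => t₀ | .top => f | .bot => g | .one => t₁, ?_, ?_⟩ <;> ext y <;>
    rw [← ENNReal.toReal_eq_toReal_iff' (PMF.apply_ne_top _ _) (PMF.apply_ne_top _ _)]
  · rw [hr0.toReal_bind_apply hδ0 hδ1, ← (hfg y).1, mul_div_cancel_left₀ _ hK]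
    exact (hp y).1.symm
  · rw [hr1.toReal_bind_apply hδ0 hδ1, ← (hfg y).2, mul_div_cancel_left₀ _ hK]
    exact (hp y).2.symm

/-- Kairouz–Oh–Viswanath simulation: any `(ε,δ)`-indistinguishable pair of PMFs
`p₀, p₁` arises as a common post-processing `T` of the randomized response pair
`RR_{ε,δ}(0), RR_{ε,δ}(1)`, via monadic bind. -/
theorem kov_randomized_response_simulation
    {Y : Type*} [Countable Y] (ε δ : ℝ) (hε : 0 ≤ ε) (hδ0 : 0 ≤ δ) (hδ1 : δ ≤ 1)
    (p0 p1 : PMF Y) (hind : Indist p0 p1 ε δ)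
    (r0 r1 : PMF RROut) (hr0 : IsRR0 ε δ r0) (hr1 : IsRR1 ε δ r1) :
    ∃ T : RROut → PMF Y, r0.bind T = p0 ∧ r1.bind T = p1 :=
  kov_randomized_response_simulation_general ε δ hε hδ0 hδ1 p0 p1 hind r0 r1 hr0 hr1
end

section
/- Basic composition under adaptively chosen mechanisms with fixed privacy parameters: in the adaptive composition model, suppose the privacy-parameter functions are constant, i.e., ε_i(w) = ε_i ≥ 0 and δ_i(w) = δ_i ∈ [0,1) for all prefixes w, for fixed reals ε_1,…,ε_k and δ_1,…,δ_k. Then the view distributions V^0 and V^1, as PMFs on Ω^k, are (Σ_{i=1}^k ε_i, Σ_{i=1}^k δ_i)-indistinguishable. -/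
open scoped ENNReal

namespace AdaptiveComp

variable {Ω : Type*}

/-- The prefix `v_{<i} = (v_1, …, v_{i-1})` of a tuple `v : Fin k → Ω`. -/
def pre {k : ℕ} (v : Fin k → Ω) (i : Fin k) : Fin i → Ω :=
  fun j => v ⟨j.1, j.2.trans i.2⟩

/-- The view distribution `V^b` of the adaptive composition game: the PMF on `Ω^k`
obtained by sampling `v_i ∼ κ i (v_1, …, v_{i-1})` sequentially for `i = 1, …, k`. -/
noncomputable def view : (k : ℕ) → ((i : Fin k) → (Fin i → Ω) → PMF Ω) → PMF (Fin k → Ω)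
  | 0, _ => PMF.pure finZeroElim
  | (k + 1), κ =>
      (view k (fun i w => κ i.castSucc w)).bind
        (fun w => (κ (Fin.last k) w).map (fun a => Fin.snoc w a))

/-- The privacy loss `Loss(v) = Σ_i log (κ⁰_i(v_{<i})({v_i}) / κ¹_i(v_{<i})({v_i}))`
of a realized view, as an extended real (each ratio is computed in `ℝ≥0∞`). -/
noncomputable def loss {k : ℕ} (κ0 κ1 : (i : Fin k) → (Fin i → Ω) → PMF Ω)
    (v : Fin k → Ω) : EReal :=
  ∑ i : Fin k, ENNReal.log (κ0 i (pre v i) (v i) / κ1 i (pre v i) (v i))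

/-- Two PMFs are `(ε,δ)`-indistinguishable if each assigns to every set at most
`e^ε` times the mass the other assigns, plus `δ`. -/
def Indist {Y : Type*} (p q : PMF Y) (ε δ : ℝ) : Prop :=
  ∀ S : Set Y,
    p.toOuterMeasure S ≤ ENNReal.ofReal (Real.exp ε) * q.toOuterMeasure S + ENNReal.ofReal δ ∧
    q.toOuterMeasure S ≤ ENNReal.ofReal (Real.exp ε) * p.toOuterMeasure S + ENNReal.ofReal δ

section Aux

variable {Y A B : Type*}

private lemma toOM_le_one (p : PMF Y) (S : Set Y) : p.toOuterMeasure S ≤ 1 := by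
  rw [PMF.toOuterMeasure_apply]
  calc ∑' a, S.indicator p a ≤ ∑' a, p a :=
        ENNReal.tsum_le_tsum (fun a => Set.indicator_le_self _ _ _)
    _ = 1 := p.tsum_coe

private lemma tsum_sub_le (p q : PMF Y) (E d : ℝ≥0∞) (hE : E ≠ ∞)
    (h : ∀ S : Set Y, p.toOuterMeasure S ≤ E * q.toOuterMeasure S + d) :
    ∑' a, (p a - E * q a) ≤ d := by
  set S : Set Y := {a | E * q a < p a} with hS
  have h1 : ∀ a, (p a - E * q a) = S.indicator (fun a => p a - E * q a) a := by
    intro a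
    by_cases ha : a ∈ S
    · rw [Set.indicator_of_mem ha]
    · rw [Set.indicator_of_notMem ha]
      have : p a ≤ E * q a := not_lt.mp ha
      exact tsub_eq_zero_of_le this
  have h2 : ∑' a, S.indicator (fun a => p a - E * q a) a + E * q.toOuterMeasure S
      = p.toOuterMeasure S := by
    rw [PMF.toOuterMeasure_apply, PMF.toOuterMeasure_apply, ← ENNReal.tsum_mul_left,
      ← ENNReal.tsum_add]
    refine tsum_congr fun a => ?_
    by_cases ha : a ∈ S
    · rw [Set.indicator_of_mem ha, Set.indicator_of_mem ha, Set.indicator_of_mem ha]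
      exact tsub_add_cancel_of_le (le_of_lt ha)
    · rw [Set.indicator_of_notMem ha, Set.indicator_of_notMem ha,
        Set.indicator_of_notMem ha]
      simp
  have hfin : E * q.toOuterMeasure S ≠ ∞ :=
    ENNReal.mul_ne_top hE (ne_top_of_le_ne_top ENNReal.one_ne_top (toOM_le_one q S))
  have hle := h S
  rw [← h2, add_comm (E * q.toOuterMeasure S) d] at hle
  have hfinal := (ENNReal.add_le_add_iff_right hfin).mp hle
  calc ∑' a, (p a - E * q a) = ∑' a, S.indicator (fun a => p a - E * q a) a :=
        tsum_congr h1
    _ ≤ d := hfinal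

private lemma bind_side (p q : PMF A) (f g : A → PMF B) (E1 E2 d1 d2 : ℝ≥0∞)
    (hd1 : ∑' a, (p a - E1 * q a) ≤ d1)
    (hfg : ∀ a (S : Set B), (f a).toOuterMeasure S ≤ E2 * (g a).toOuterMeasure S + d2)
    (S : Set B) :
    (p.bind f).toOuterMeasure S ≤ E1 * E2 * (q.bind g).toOuterMeasure S + (d1 + d2) := by
  rw [PMF.toOuterMeasure_bind_apply, PMF.toOuterMeasure_bind_apply]
  have key : ∀ a, p a * (f a).toOuterMeasure S ≤
      (E1 * E2 * (q a * (g a).toOuterMeasure S) + d2 * p a) + (p a - E1 * q a) := by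
    intro a
    have hsplit : p a ≤ min (p a) (E1 * q a) + (p a - E1 * q a) := by
      rcases le_total (p a) (E1 * q a) with hle | hle
      · simp [min_eq_left hle]
      · rw [min_eq_right hle]; exact le_add_tsub
    calc p a * (f a).toOuterMeasure S
        ≤ (min (p a) (E1 * q a) + (p a - E1 * q a)) * (f a).toOuterMeasure S := by gcongr
      _ = min (p a) (E1 * q a) * (f a).toOuterMeasure S
          + (p a - E1 * q a) * (f a).toOuterMeasure S := by rw [add_mul]
      _ ≤ (E1 * E2 * (q a * (g a).toOuterMeasure S) + d2 * p a) + (p a - E1 * q a) := by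
          gcongr
          · calc min (p a) (E1 * q a) * (f a).toOuterMeasure S
                ≤ min (p a) (E1 * q a) * (E2 * (g a).toOuterMeasure S + d2) := by
                  gcongr; exact hfg a S
              _ = min (p a) (E1 * q a) * (E2 * (g a).toOuterMeasure S)
                  + min (p a) (E1 * q a) * d2 := by rw [mul_add]
              _ ≤ E1 * q a * (E2 * (g a).toOuterMeasure S) + p a * d2 := by
                  gcongr
                  · exact min_le_right _ _
                  · exact min_le_left _ _
              _ = E1 * E2 * (q a * (g a).toOuterMeasure S) + d2 * p a := by ring
          · calc (p a - E1 * q a) * (f a).toOuterMeasure S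
                ≤ (p a - E1 * q a) * 1 := by gcongr; exact toOM_le_one _ _
              _ = p a - E1 * q a := mul_one _
  calc ∑' a, p a * (f a).toOuterMeasure S
      ≤ ∑' a, ((E1 * E2 * (q a * (g a).toOuterMeasure S) + d2 * p a) + (p a - E1 * q a)) :=
        ENNReal.tsum_le_tsum key
    _ = (E1 * E2 * ∑' a, q a * (g a).toOuterMeasure S + d2 * ∑' a, p a)
        + ∑' a, (p a - E1 * q a) := by
        rw [ENNReal.tsum_add, ENNReal.tsum_add, ENNReal.tsum_mul_left, ENNReal.tsum_mul_left]
    _ ≤ (E1 * E2 * ∑' a, q a * (g a).toOuterMeasure S + d2 * 1) + d1 := by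
        gcongr; rw [p.tsum_coe]
    _ = E1 * E2 * ∑' a, q a * (g a).toOuterMeasure S + (d1 + d2) := by ring

private lemma indist_refl (p : PMF Y) : Indist p p 0 0 := by
  intro S
  simp [Real.exp_zero]

private lemma indist_map (p q : PMF A) (f : A → B) {ε δ : ℝ} (h : Indist p q ε δ) :
    Indist (p.map f) (q.map f) ε δ := by
  intro S
  rw [PMF.toOuterMeasure_map_apply, PMF.toOuterMeasure_map_apply]
  exact h _

private lemma indist_bind (p q : PMF A) (f g : A → PMF B) {ε1 δ1 ε2 δ2 : ℝ}
    (hδ1 : 0 ≤ δ1) (hδ2 : 0 ≤ δ2)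
    (hpq : Indist p q ε1 δ1) (hfg : ∀ a, Indist (f a) (g a) ε2 δ2) :
    Indist (p.bind f) (q.bind g) (ε1 + ε2) (δ1 + δ2) := by
  have hE : ENNReal.ofReal (Real.exp (ε1 + ε2))
      = ENNReal.ofReal (Real.exp ε1) * ENNReal.ofReal (Real.exp ε2) := by
    rw [Real.exp_add, ENNReal.ofReal_mul (Real.exp_nonneg _)]
  have hD : ENNReal.ofReal (δ1 + δ2) = ENNReal.ofReal δ1 + ENNReal.ofReal δ2 :=
    ENNReal.ofReal_add hδ1 hδ2
  intro S
  rw [hE, hD]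
  exact ⟨bind_side p q f g _ _ _ _
      (tsum_sub_le p q _ _ ENNReal.ofReal_ne_top (fun T => (hpq T).1)) (fun a T => (hfg a T).1) S,
    bind_side q p g f _ _ _ _
      (tsum_sub_le q p _ _ ENNReal.ofReal_ne_top (fun T => (hpq T).2)) (fun a T => (hfg a T).2) S⟩

private lemma main_aux : ∀ (k : ℕ) (κ0 κ1 : (i : Fin k) → (Fin i → Ω) → PMF Ω)
    (ε δ : Fin k → ℝ), (∀ i, 0 ≤ δ i) →
    (∀ (i : Fin k) (w : Fin i → Ω), Indist (κ0 i w) (κ1 i w) (ε i) (δ i)) →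
    Indist (view k κ0) (view k κ1) (∑ i, ε i) (∑ i, δ i) := by
  intro k
  induction k with
  | zero =>
      intro κ0 κ1 ε δ hδ0 hind
      simpa [view] using indist_refl (PMF.pure finZeroElim : PMF (Fin 0 → Ω))
  | succ k ih =>
      intro κ0 κ1 ε δ hδ0 hind
      rw [Fin.sum_univ_castSucc ε, Fin.sum_univ_castSucc δ]
      simp only [view]
      exact indist_bind _ _ _ _ (Finset.sum_nonneg fun i _ => hδ0 _) (hδ0 _)
        (ih _ _ _ _ (fun i => hδ0 _) (fun i w => hind i.castSucc w))
        (fun w => indist_map _ _ _ (hind (Fin.last k) w))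

end Aux

/-- Basic composition under adaptively chosen mechanisms with fixed privacy
parameters: if the privacy-parameter functions are constant, equal to fixed reals
`ε_i ≥ 0` and `δ_i ∈ [0,1)`, then the views `V^0` and `V^1` are
`(Σ ε_i, Σ δ_i)`-indistinguishable. -/
theorem basic_composition_fixed_params [Countable Ω] (k : ℕ)
    (κ0 κ1 : (i : Fin k) → (Fin i → Ω) → PMF Ω)
    (ε δ : Fin k → ℝ) (hε : ∀ i, 0 ≤ ε i) (hδ0 : ∀ i, 0 ≤ δ i) (hδ1 : ∀ i, δ i < 1)
    (hind : ∀ (i : Fin k) (w : Fin i → Ω), Indist (κ0 i w) (κ1 i w) (ε i) (δ i)) :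
    Indist (view k κ0) (view k κ1) (∑ i, ε i) (∑ i, δ i) :=
  main_aux k κ0 κ1 ε δ hδ0 hind

end AdaptiveComp
end

section
/- Advanced composition (Dwork–Rothblum–Vadhan): in the adaptive composition model, suppose ε_i(w) = ε ≥ 0 and δ_i(w) = δ ∈ [0,1) for all i and all prefixes w. Then for every δ̂ > 0, the view distributions V^0 and V^1, as PMFs on Ω^k, are (ε_g, δ_g)-indistinguishable with ε_g = ε(e^ε − 1)·k + ε·√(2k·log(1/δ̂)) and δ_g = k·δ + δ̂. -/
open scoped ENNReal

namespace AdaptiveComp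

variable {Ω : Type*}

/-!
Each round is first made *pure*: an `(ε, δ)`-indistinguishable pair `κ⁰ᵢ(w), κ¹ᵢ(w)` dominates
sub-probability weights `p ≤ κ⁰ᵢ(w)`, `q ≤ κ¹ᵢ(w)` with `e^{-ε} ≤ p / q ≤ e^ε` and `∑ p ≤ ∑ q`,
where `p` misses at most `δ` of the mass of `κ⁰ᵢ(w)`. A hybrid argument over the `k` rounds then
replaces `V⁰` by the product weight of the `p`'s at a cost of `kδ`.

For the pure weights, the privacy loss `log (p / q)` of a round lies in `[-ε, ε]` and has mean at
most `ε (e^ε - 1)` (a bound on the Kullback–Leibler divergence), so by Hoeffding's lemma its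
exponential moment of order `l` is at most `exp (l ε (e^ε - 1) + l² ε² / 2)`. These moments
multiply over the rounds, and Markov's inequality with the optimal `l` shows that views whose
total loss exceeds `ε_g` carry weight at most `δ̂`. On all other views the weight of the `p`'s is
at most `e^{ε_g}` times that of the `q`'s, hence of `V¹`.
-/

open Real ProbabilityTheory MeasureTheory

theorem pre_snoc_last {k : ℕ} (w : Fin k → Ω) (a : Ω) :
    pre (Fin.snoc w a : Fin (k + 1) → Ω) (Fin.last k) = w :=
  Fin.init_snoc (α := fun _ => Ω) a w

theorem pre_snoc_castSucc {k : ℕ} (w : Fin k → Ω) (a : Ω) (i : Fin k) :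
    pre (Fin.snoc w a : Fin (k + 1) → Ω) i.castSucc = pre w i :=
  funext fun j => Fin.snoc_castSucc (α := fun _ => Ω) (p := w) (x := a) ⟨j, j.2.trans i.2⟩

noncomputable def prodWeight {k : ℕ} (κ : (i : Fin k) → (Fin i → Ω) → Ω → ℝ≥0∞)
    (v : Fin k → Ω) : ℝ≥0∞ :=
  ∏ i, κ i (pre v i) (v i)

section prodWeight

variable {k : ℕ}

theorem prodWeight_snoc (κ : (i : Fin (k + 1)) → (Fin i → Ω) → Ω → ℝ≥0∞) (w : Fin k → Ω)
    (a : Ω) :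
    prodWeight κ (Fin.snoc w a) = prodWeight (fun i => κ i.castSucc) w * κ (Fin.last k) w a := by
  simp only [prodWeight, Fin.prod_univ_castSucc, pre_snoc_castSucc, Fin.snoc_castSucc,
    Fin.snoc_last, pre_snoc_last]

theorem prodWeight_mono {κ κ' : (i : Fin k) → (Fin i → Ω) → Ω → ℝ≥0∞}
    (h : ∀ i w a, κ i w a ≤ κ' i w a) (v : Fin k → Ω) : prodWeight κ v ≤ prodWeight κ' v :=
  Finset.prod_le_prod' fun i _ => h i _ _

theorem ENNReal.tsum_eq_tsum_snoc (f : (Fin (k + 1) → Ω) → ℝ≥0∞) :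
    ∑' v, f v = ∑' (w : Fin k → Ω) (a : Ω), f (Fin.snoc w a) := by
  rw [← (Fin.snocEquiv fun _ => Ω).tsum_eq, ENNReal.tsum_prod', ENNReal.tsum_comm]
  rfl

theorem tsum_prodWeight_le_pow {κ : (i : Fin k) → (Fin i → Ω) → Ω → ℝ≥0∞} {B : ℝ≥0∞}
    (hκ : ∀ i w, ∑' a, κ i w a ≤ B) : ∑' v, prodWeight κ v ≤ B ^ k := by
  induction k with
  | zero => simp [prodWeight, tsum_fintype]
  | succ k ih =>
    calc ∑' v, prodWeight κ v
        = ∑' w, prodWeight (fun i => κ i.castSucc) w * ∑' a, κ (Fin.last k) w a := by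
          simp only [ENNReal.tsum_eq_tsum_snoc, prodWeight_snoc, ENNReal.tsum_mul_left]
      _ ≤ ∑' w, prodWeight (fun i => κ i.castSucc) w * B := by
          gcongr with w; exact hκ (Fin.last k) w
      _ ≤ B ^ k * B := by
          rw [ENNReal.tsum_mul_right]; gcongr; exact ih fun i => hκ i.castSucc
      _ = B ^ (k + 1) := (pow_succ B k).symm

theorem ENNReal.mul_tsub_mul_le (a b c d : ℝ≥0∞) : a * b - c * d ≤ (a - c) * b + c * (b - d) := by
  rw [tsub_le_iff_right]
  calc a * b ≤ (a - c + c) * b := by gcongr; exact le_tsub_add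
    _ ≤ (a - c) * b + c * (b - d + d) := by rw [add_mul]; gcongr; exact le_tsub_add
    _ = (a - c) * b + c * (b - d) + c * d := by ring

theorem tsum_prodWeight_tsub_le {κ κ' : (i : Fin k) → (Fin i → Ω) → Ω → ℝ≥0∞} {η : ℝ≥0∞}
    (hκ : ∀ i w, ∑' a, κ i w a ≤ 1) (hκ' : ∀ i w, ∑' a, κ' i w a ≤ 1)
    (hclose : ∀ i w, ∑' a, (κ i w a - κ' i w a) ≤ η) :
    ∑' v, (prodWeight κ v - prodWeight κ' v) ≤ k * η := by
  induction k with
  | zero => simp [prodWeight]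
  | succ k ih =>
    set W := prodWeight fun i => κ i.castSucc
    set W' := prodWeight fun i => κ' i.castSucc
    calc ∑' v, (prodWeight κ v - prodWeight κ' v)
        ≤ ∑' w, ((W w - W' w) * ∑' a, κ (Fin.last k) w a
            + W' w * ∑' a, (κ (Fin.last k) w a - κ' (Fin.last k) w a)) := by
          simp only [ENNReal.tsum_eq_tsum_snoc, prodWeight_snoc, ← ENNReal.tsum_mul_left,
            ← ENNReal.tsum_add]
          gcongr
          exact ENNReal.mul_tsub_mul_le _ _ _ _
      _ ≤ ∑' w, ((W w - W' w) * 1 + W' w * η) := by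
          gcongr with w
          · exact hκ (Fin.last k) w
          · exact hclose (Fin.last k) w
      _ ≤ k * η * 1 + 1 * η := by
          rw [ENNReal.tsum_add, ENNReal.tsum_mul_right, ENNReal.tsum_mul_right]
          gcongr
          · exact ih (fun i => hκ i.castSucc) (fun i => hκ' i.castSucc) fun i => hclose i.castSucc
          · simpa using tsum_prodWeight_le_pow fun i => hκ' i.castSucc
      _ = (k + 1 : ℕ) * η := by push_cast; ring

theorem prodWeight_mul_rpow (κ κ' : (i : Fin k) → (Fin i → Ω) → Ω → ℝ≥0∞) {l : ℝ}
    (hl : 0 ≤ l) (v : Fin k → Ω) :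
    prodWeight κ v * prodWeight κ' v ^ l = prodWeight (fun i w a => κ i w a * κ' i w a ^ l) v := by
  rw [prodWeight, prodWeight, prodWeight, ← ENNReal.prod_rpow_of_nonneg hl,
    ← Finset.prod_mul_distrib]

theorem prodWeight_le_prodWeight_div_mul {p q : (i : Fin k) → (Fin i → Ω) → Ω → ℝ≥0∞}
    (hpq : ∀ i w a, q i w a = 0 → p i w a = 0) (hq : ∀ i w a, q i w a ≠ ∞) (v : Fin k → Ω) :
    prodWeight p v ≤ prodWeight (fun i w a => p i w a / q i w a) v * prodWeight q v := by
  rw [prodWeight, prodWeight, prodWeight, ← Finset.prod_mul_distrib]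
  refine Finset.prod_le_prod' fun i _ => ?_
  by_cases h0 : q i (pre v i) (v i) = 0
  · simp [hpq _ _ _ h0]
  · rw [ENNReal.div_mul_cancel h0 (hq _ _ _)]

end prodWeight

open scoped Classical in
theorem map_snoc_apply {k : ℕ} (w : Fin k → Ω) (μ : PMF Ω) (v : Fin (k + 1) → Ω) :
    μ.map (Fin.snoc w) v = if Fin.init v = w then μ (v (Fin.last k)) else 0 := by
  rw [PMF.map_apply]
  split_ifs with h
  · subst h
    rw [tsum_eq_single (v (Fin.last k))]
    · simp [Fin.snoc_init_self]
    · exact fun a ha => if_neg fun hv => ha (by rw [hv, Fin.snoc_last])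
  · refine ENNReal.tsum_eq_zero.2 fun a => if_neg ?_
    rintro rfl
    simp at h

theorem view_apply {k : ℕ} (κ : (i : Fin k) → (Fin i → Ω) → PMF Ω) (v : Fin k → Ω) :
    view k κ v = prodWeight (fun i w => κ i w) v := by
  induction k with
  | zero => simp [view, prodWeight, Subsingleton.elim v finZeroElim]
  | succ k ih =>
    rw [view, PMF.bind_apply, tsum_eq_single (Fin.init v), map_snoc_apply, if_pos rfl, ih]
    · conv_rhs => rw [← Fin.snoc_init_self v, prodWeight_snoc]
      rfl
    · intro w hw
      rw [map_snoc_apply, if_neg (Ne.symm hw), mul_zero]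

theorem toOuterMeasure_view {k : ℕ} (κ : (i : Fin k) → (Fin i → Ω) → PMF Ω)
    (S : Set (Fin k → Ω)) :
    (view k κ).toOuterMeasure S = ∑' v, S.indicator (prodWeight fun i w => κ i w) v := by
  rw [PMF.toOuterMeasure_apply]
  congr 1 with v
  by_cases hv : v ∈ S <;> simp [hv, view_apply]

-- Hoeffding's lemma for the law on `{-ε, ε}` with mean `m`
theorem cosh_add_div_mul_sinh_le {ε m : ℝ} (l : ℝ) (hε : 0 < ε) (hm : |m| ≤ ε) :
    cosh (l * ε) + m / ε * sinh (l * ε) ≤ exp (l * m + l ^ 2 * ε ^ 2 / 2) := by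
  obtain ⟨hm₁, hm₂⟩ := abs_le.1 hm
  let p : unitInterval := ⟨(m + ε) / (2 * ε),
    div_nonneg (by linarith) (by linarith), (div_le_one (by linarith)).2 (by linarith)⟩
  set μ := bernoulliMeasure ε (-ε) p
  have hbound : ∀ᵐ x ∂μ, x ∈ Set.Icc (-ε) ε := by
    rw [ae_iff]
    exact bernoulliMeasure_apply_of_notMem_of_notMem p measurableSet_Icc.compl
      (by simp [hε.le]) (by simp [hε.le])
  have hmean : μ[id] = m := by
    simp only [μ, integral_bernoulliMeasure, p, smul_eq_mul, id]
    field_simp; ring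
  have hmgf : mgf (fun x => id x - μ[id]) μ l =
      exp (-(l * m)) * (cosh (l * ε) + m / ε * sinh (l * ε)) := by
    rw [hmean]
    simp only [mgf, μ, integral_bernoulliMeasure, p, smul_eq_mul, id, cosh_eq, sinh_eq, mul_sub,
      mul_neg, exp_sub, exp_neg]
    field_simp
    ring
  have hvar : (((‖ε - -ε‖₊ / 2) ^ 2 : NNReal) : ℝ) = ε ^ 2 := by
    push_cast
    rw [Real.norm_eq_abs, abs_of_pos (by linarith)]
    ring
  have := (hasSubgaussianMGF_of_mem_Icc aemeasurable_id hbound).mgf_le l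
  rw [hmgf, hvar, ← le_div_iff₀' (exp_pos _), ← exp_sub] at this
  refine this.trans_eq (congrArg exp ?_)
  ring

theorem exp_mul_le_cosh_add_div_mul_sinh {ε x : ℝ} (l : ℝ) (hε : 0 < ε) (hx : |x| ≤ ε) :
    exp (l * x) ≤ cosh (l * ε) + x / ε * sinh (l * ε) := by
  obtain ⟨hx₁, hx₂⟩ := abs_le.1 hx
  have ha : 0 ≤ (ε - x) / (2 * ε) := div_nonneg (by linarith) (by linarith)
  have hb : 0 ≤ (ε + x) / (2 * ε) := div_nonneg (by linarith) (by linarith)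
  have key := convexOn_exp.2 (Set.mem_univ (-(l * ε))) (Set.mem_univ (l * ε)) ha hb
    (by field_simp; ring)
  simp only [smul_eq_mul] at key
  calc exp (l * x) = exp ((ε - x) / (2 * ε) * -(l * ε) + (ε + x) / (2 * ε) * (l * ε)) := by
        congr 1; field_simp; ring
    _ ≤ (ε - x) / (2 * ε) * exp (-(l * ε)) + (ε + x) / (2 * ε) * exp (l * ε) := key
    _ = cosh (l * ε) + x / ε * sinh (l * ε) := by rw [cosh_eq, sinh_eq]; field_simp; ring

theorem pos_of_le_exp_mul {ε p q : ℝ} (hp : 0 < p) (hpq : p ≤ exp ε * q) : 0 < q :=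
  pos_of_mul_pos_right (hp.trans_le hpq) (exp_pos ε).le

theorem abs_log_div_le {ε p q : ℝ} (hε : 0 ≤ ε) (hp : 0 ≤ p) (hpq : p ≤ exp ε * q)
    (hqp : q ≤ exp ε * p) : |log (p / q)| ≤ ε := by
  rcases hp.eq_or_lt with rfl | hp
  · simpa using hε
  have hq := pos_of_le_exp_mul hp hpq
  rw [abs_le, le_log_iff_exp_le (div_pos hp hq), log_le_iff_le_exp (div_pos hp hq),
    le_div_iff₀ hq, div_le_iff₀ hq, exp_neg, inv_mul_le_iff₀ (exp_pos ε)]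
  exact ⟨hqp, hpq⟩

theorem mul_log_div_le {ε p q : ℝ} (hε : 0 ≤ ε) (hp : 0 ≤ p) (hpq : p ≤ exp ε * q)
    (hqp : q ≤ exp ε * p) : p * log (p / q) ≤ p - q + ε * (exp ε - 1) * p := by
  rcases hp.eq_or_lt with rfl | hp
  · have : q ≤ 0 := by simpa using hqp
    simpa using this
  have hq := pos_of_le_exp_mul hp hpq
  have h_one := one_le_exp hε
  have hlog : q * log (p / q) ≤ p - q := by
    have := mul_le_mul_of_nonneg_left (log_le_sub_one_of_pos (div_pos hp hq)) hq.le
    rwa [mul_sub, mul_div_cancel₀ _ hq.ne', mul_one] at this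
  have hdiff : |p - q| ≤ (exp ε - 1) * p := by
    rw [abs_le]; constructor <;> nlinarith
  have hcross : (p - q) * log (p / q) ≤ (exp ε - 1) * p * ε :=
    (le_abs_self _).trans <| by
      rw [abs_mul]
      exact mul_le_mul hdiff (abs_log_div_le hε hp.le hpq hqp) (abs_nonneg _) (by nlinarith)
  linear_combination hlog + hcross

section loss

variable {ι : Type*} {P Q : ι → ℝ} {ε : ℝ}

theorem summable_mul_log_div (hε : 0 ≤ ε) (hP : ∀ a, 0 ≤ P a) (hPs : Summable P)
    (hPQ : ∀ a, P a ≤ exp ε * Q a) (hQP : ∀ a, Q a ≤ exp ε * P a) :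
    Summable fun a => P a * log (P a / Q a) :=
  hPs.mul_left ε |>.of_norm_bounded fun a => by
    rw [norm_mul, Real.norm_of_nonneg (hP a), mul_comm]
    exact mul_le_mul_of_nonneg_right (abs_log_div_le hε (hP a) (hPQ a) (hQP a)) (hP a)

theorem tsum_mul_log_div_le (hε : 0 ≤ ε) (hP : ∀ a, 0 ≤ P a) (hPs : Summable P)
    (hQs : Summable Q) (hPQ : ∀ a, P a ≤ exp ε * Q a) (hQP : ∀ a, Q a ≤ exp ε * P a)
    (hmass : ∑' a, P a ≤ ∑' a, Q a) :
    ∑' a, P a * log (P a / Q a) ≤ ε * (exp ε - 1) * ∑' a, P a := by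
  calc ∑' a, P a * log (P a / Q a) ≤ ∑' a, (P a - Q a + ε * (exp ε - 1) * P a) :=
        (summable_mul_log_div hε hP hPs hPQ hQP).tsum_le_tsum
          (fun a => mul_log_div_le hε (hP a) (hPQ a) (hQP a)) ((hPs.sub hQs).add (hPs.mul_left _))
    _ ≤ ε * (exp ε - 1) * ∑' a, P a := by
        rw [(hPs.sub hQs).tsum_add (hPs.mul_left _), hPs.tsum_sub hQs, tsum_mul_left]
        linarith

theorem Real.tsum_mul_rpow_div_le {l : ℝ} (hε : 0 < ε) (hl : 0 ≤ l) (hP : ∀ a, 0 ≤ P a)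
    (hPs : Summable P) (hQs : Summable Q)
    (hPQ : ∀ a, P a ≤ exp ε * Q a) (hQP : ∀ a, Q a ≤ exp ε * P a)
    (hmass : ∑' a, P a ≤ ∑' a, Q a) (hP1 : ∑' a, P a ≤ 1) :
    ∑' a, P a * (P a / Q a) ^ l ≤ exp (l * (ε * (exp ε - 1)) + l ^ 2 * ε ^ 2 / 2) := by
  set X := fun a => log (P a / Q a)
  set m := min (ε * (exp ε - 1)) ε
  have hX a : |X a| ≤ ε := abs_log_div_le hε.le (hP a) (hPQ a) (hQP a)
  have hterm a : P a * (P a / Q a) ^ l = P a * exp (l * X a) := by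
    rcases (hP a).eq_or_lt with h | h
    · simp [← h]
    · rw [rpow_def_of_pos (div_pos h (pos_of_le_exp_mul h (hPQ a))), mul_comm l]
  have hPX := summable_mul_log_div hε.le hP hPs hPQ hQP
  -- `cosh_add_div_mul_sinh_le` needs the mean loss in `[-ε, ε]`, hence the `min`
  have hmean : ∑' a, P a * X a ≤ m * ∑' a, P a := by
    rw [min_mul_of_nonneg _ _ (tsum_nonneg hP)]
    refine le_min (tsum_mul_log_div_le hε.le hP hPs hQs hPQ hQP hmass) ?_
    rw [← tsum_mul_left]
    exact hPX.tsum_le_tsum (fun a => by nlinarith [hP a, (abs_le.1 (hX a)).2]) (hPs.mul_left ε)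
  have hm : |m| ≤ ε :=
    abs_le.2 ⟨by have := one_le_exp hε.le; exact le_min (by nlinarith) (by linarith),
      min_le_right _ _⟩
  have hchord a :
      P a * exp (l * X a) ≤ cosh (l * ε) * P a + sinh (l * ε) / ε * (P a * X a) := by
    refine (mul_le_mul_of_nonneg_left
      (exp_mul_le_cosh_add_div_mul_sinh l hε (hX a)) (hP a)).trans_eq ?_
    ring
  have hsinh : 0 ≤ sinh (l * ε) / ε := div_nonneg (sinh_nonneg_iff.2 (by positivity)) hε.le
  have hsum := (hPs.mul_left (cosh (l * ε))).add (hPX.mul_left (sinh (l * ε) / ε))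
  calc ∑' a, P a * (P a / Q a) ^ l = ∑' a, P a * exp (l * X a) := tsum_congr hterm
    _ ≤ ∑' a, (cosh (l * ε) * P a + sinh (l * ε) / ε * (P a * X a)) :=
        (hsum.of_nonneg_of_le (fun a => mul_nonneg (hP a) (exp_pos _).le) hchord).tsum_le_tsum
          hchord hsum
    _ = cosh (l * ε) * ∑' a, P a + sinh (l * ε) / ε * ∑' a, P a * X a := by
        rw [(hPs.mul_left _).tsum_add (hPX.mul_left _), tsum_mul_left, tsum_mul_left]
    _ ≤ cosh (l * ε) * ∑' a, P a + sinh (l * ε) / ε * (m * ∑' a, P a) := by gcongr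
    _ = (cosh (l * ε) + m / ε * sinh (l * ε)) * ∑' a, P a := by ring
    _ ≤ exp (l * m + l ^ 2 * ε ^ 2 / 2) * 1 :=
        mul_le_mul (cosh_add_div_mul_sinh_le l hε hm) hP1 (tsum_nonneg hP) (exp_pos _).le
    _ ≤ exp (l * (ε * (exp ε - 1)) + l ^ 2 * ε ^ 2 / 2) := by
        rw [mul_one]; gcongr; exact min_le_left _ _

end loss

theorem ENNReal.tsum_mul_rpow_div_le {ι : Type*} {p q : ι → ℝ≥0∞} {ε l : ℝ} (hε : 0 < ε)
    (hl : 0 ≤ l) (hpq : ∀ a, p a ≤ ENNReal.ofReal (exp ε) * q a)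
    (hqp : ∀ a, q a ≤ ENNReal.ofReal (exp ε) * p a) (hmass : ∑' a, p a ≤ ∑' a, q a)
    (hp1 : ∑' a, p a ≤ 1) :
    ∑' a, p a * (p a / q a) ^ l ≤
      ENNReal.ofReal (exp (l * (ε * (exp ε - 1)) + l ^ 2 * ε ^ 2 / 2)) := by
  set E := ENNReal.ofReal (exp ε)
  have hE : E ≠ ∞ := ENNReal.ofReal_ne_top
  have hp : ∑' a, p a ≠ ∞ := ne_top_of_le_ne_top ENNReal.one_ne_top hp1
  have hq : ∑' a, q a ≠ ∞ := by
    refine ne_top_of_le_ne_top (ENNReal.mul_ne_top hE hp) ?_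
    rw [← ENNReal.tsum_mul_left]
    exact ENNReal.tsum_le_tsum hqp
  have hpa := ENNReal.ne_top_of_tsum_ne_top hp
  have hqa := ENNReal.ne_top_of_tsum_ne_top hq
  have hreal {x y : ℝ≥0∞} (hy : y ≠ ∞) (h : x ≤ E * y) : x.toReal ≤ exp ε * y.toReal := by
    simpa [E, ENNReal.toReal_mul, (exp_pos ε).le] using
      ENNReal.toReal_mono (ENNReal.mul_ne_top hE hy) h
  have key := Real.tsum_mul_rpow_div_le hε hl (fun _ => ENNReal.toReal_nonneg)
    (ENNReal.summable_toReal hp) (ENNReal.summable_toReal hq)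
    (fun a => hreal (hqa a) (hpq a)) (fun a => hreal (hpa a) (hqp a))
    (by rw [← ENNReal.tsum_toReal_eq hpa, ← ENNReal.tsum_toReal_eq hqa]
        exact ENNReal.toReal_mono hq hmass)
    (by rw [← ENNReal.tsum_toReal_eq hpa]
        exact ENNReal.toReal_le_of_le_ofReal zero_le_one (by simpa using hp1))
  have hEl : E ^ l ≠ ∞ := ENNReal.rpow_ne_top_of_nonneg hl hE
  have hterm a : p a * (p a / q a) ^ l ≤ E ^ l * p a := by
    rw [mul_comm]
    gcongr
    exact ENNReal.div_le_of_le_mul (hpq a)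
  have hT : ∑' a, p a * (p a / q a) ^ l ≠ ∞ := by
    refine ne_top_of_le_ne_top (ENNReal.mul_ne_top hEl hp) ?_
    rw [← ENNReal.tsum_mul_left]
    exact ENNReal.tsum_le_tsum hterm
  rw [← ENNReal.ofReal_toReal hT, ENNReal.tsum_toReal_eq fun a =>
    ne_top_of_le_ne_top (ENNReal.mul_ne_top hEl (hpa a)) (hterm a)]
  simpa [← ENNReal.toReal_rpow, ENNReal.toReal_div] using ENNReal.ofReal_le_ofReal key

theorem ENNReal.exists_le_tsum_eq {ι : Type*} {u : ι → ℝ≥0∞} {m : ℝ≥0∞} (hm : m ≤ ∑' a, u a)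
    (hu : ∑' a, u a ≠ ∞) : ∃ r : ι → ℝ≥0∞, (∀ a, r a ≤ u a) ∧ ∑' a, r a = m := by
  refine ⟨fun a => (m / ∑' a, u a) * u a, fun a => ?_, ?_⟩
  · exact mul_le_of_le_one_left zero_le (ENNReal.div_le_of_le_mul (by rwa [one_mul]))
  · rw [ENNReal.tsum_mul_left]
    rcases eq_or_ne (∑' a, u a) 0 with h | h
    · rw [h, mul_zero, eq_comm, ← nonpos_iff_eq_zero, ← h]
      exact hm
    · exact ENNReal.div_mul_cancel h hu

theorem PMF.tsum_tsub_mul_le_of_toOuterMeasure_le {ι : Type*} {p q : PMF ι} {E η : ℝ≥0∞} (hE : E ≠ ∞)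
    (h : ∀ S, p.toOuterMeasure S ≤ E * q.toOuterMeasure S + η) :
    ∑' a, (p a - E * q a) ≤ η := by
  set B := {a | E * q a < p a}
  have hsplit : ∑' a, (p a - E * q a) + E * q.toOuterMeasure B = p.toOuterMeasure B := by
    rw [PMF.toOuterMeasure_apply, PMF.toOuterMeasure_apply, ← ENNReal.tsum_mul_left,
      ← ENNReal.tsum_add]
    refine tsum_congr fun a => ?_
    by_cases ha : a ∈ B
    · simp [ha, tsub_add_cancel_of_le (show E * q a < p a from ha).le]
    · simp [ha, tsub_eq_zero_of_le (not_lt.1 (show ¬E * q a < p a from ha))]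
  have hB : q.toOuterMeasure B ≤ 1 := by
    rw [PMF.toOuterMeasure_apply, ← q.tsum_coe]
    exact ENNReal.tsum_le_tsum (Set.indicator_le_self B q)
  have hfin : E * q.toOuterMeasure B ≠ ∞ :=
    ENNReal.mul_ne_top hE (ne_top_of_le_ne_top ENNReal.one_ne_top hB)
  rw [← ENNReal.add_le_add_iff_right hfin, hsplit, add_comm η]
  exact h B

theorem ENNReal.add_tsub_le_of_add_eq {a b x y η : ℝ≥0∞} (h : x + a = y + b) (hy : y ≠ ∞)
    (ha : a ≤ η) (hb : b ≤ η) : a + (x - y) ≤ η := by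
  rcases le_total x y with hxy | hxy
  · rwa [tsub_eq_zero_of_le hxy, add_zero]
  · rw [← ENNReal.add_le_add_iff_right hy, add_assoc, tsub_add_cancel_of_le hxy, add_comm, h,
      add_comm η]
    gcongr

theorem ENNReal.min_mul_le_mul_min {E x y : ℝ≥0∞} (hE : 1 ≤ E) :
    min x (E * y) ≤ E * min y (E * x) := by
  rcases le_total y (E * x) with h | h
  · rw [min_eq_left h]; exact min_le_right _ _
  · rw [min_eq_right h, ← mul_assoc]
    exact (min_le_left _ _).trans (le_mul_of_one_le_left' (one_le_mul hE hE))

theorem ENNReal.exists_tsum_le_of_le_mul {ι : Type*} {E : ℝ≥0∞} (hE1 : 1 ≤ E) (hE : E ≠ ∞)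
    {f g : ι → ℝ≥0∞} (hgf : ∀ a, g a ≤ E * f a) (hf : ∑' a, f a ≠ ∞) :
    ∃ f' : ι → ℝ≥0∞, (∀ a, f' a ≤ f a) ∧ (∀ a, g a ≤ E * f' a) ∧ ∑' a, f' a ≤ ∑' a, g a ∧
      ∑' a, (f a - f' a) ≤ ∑' a, f a - ∑' a, g a := by
  have hE0 : E ≠ 0 := (zero_lt_one.trans_le hE1).ne'
  have hgf' a : g a / E ≤ f a := ENNReal.div_le_of_le_mul ((hgf a).trans_eq (mul_comm _ _))
  -- lower `f` towards `g / E` by a multiple of `f - g / E` carrying the mass `∑ f - ∑ g`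
  obtain ⟨r, hr, hr_sum⟩ := ENNReal.exists_le_tsum_eq (u := fun a => f a - g a / E)
    (m := ∑' a, f a - ∑' a, g a) (by
      rw [tsub_le_iff_right, ← ENNReal.tsum_add]
      exact ENNReal.tsum_le_tsum fun a => le_tsub_add.trans
        (by gcongr; exact ENNReal.div_le_of_le_mul (le_mul_of_one_le_right' hE1)))
    (ne_top_of_le_ne_top hf (ENNReal.tsum_le_tsum fun a => tsub_le_self))
  have hrf a : r a ≤ f a := (hr a).trans tsub_le_self
  have hfa := ENNReal.ne_top_of_tsum_ne_top hf
  refine ⟨fun a => f a - r a, fun a => tsub_le_self, fun a => ?_, ?_, ?_⟩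
  · calc g a = E * (g a / E) := (ENNReal.mul_div_cancel hE0 hE).symm
      _ ≤ E * (f a - r a) := by
          gcongr
          exact (ENNReal.sub_sub_cancel (hfa a) (hgf' a)).ge.trans (tsub_le_tsub_left (hr a) _)
  · have hsum : ∑' a, (f a - r a) + (∑' a, f a - ∑' a, g a) = ∑' a, f a := by
      rw [← hr_sum, ← ENNReal.tsum_add]
      exact tsum_congr fun a => tsub_add_cancel_of_le (hrf a)
    rw [← ENNReal.add_le_add_iff_right (ne_top_of_le_ne_top hf tsub_le_self), hsum]
    exact le_add_tsub
  · rw [← hr_sum]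
    exact (tsum_congr fun a => ENNReal.sub_sub_cancel (hfa a) (hrf a)).le

theorem Indist.symm {Y : Type*} {p q : PMF Y} {ε δ : ℝ} (h : Indist p q ε δ) : Indist q p ε δ :=
  fun S => (h S).symm

theorem Indist.exists_pure {ι : Type*} {p q : PMF ι} {ε δ : ℝ} (hε : 0 ≤ ε)
    (h : Indist p q ε δ) :
    ∃ p' q' : ι → ℝ≥0∞,
      (∀ a, p' a ≤ ENNReal.ofReal (exp ε) * q' a) ∧ (∀ a, q' a ≤ ENNReal.ofReal (exp ε) * p' a) ∧
      ∑' a, p' a ≤ ∑' a, q' a ∧ (∀ a, p' a ≤ p a) ∧ (∀ a, q' a ≤ q a) ∧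
      ∑' a, (p a - p' a) ≤ ENNReal.ofReal δ := by
  set E := ENNReal.ofReal (exp ε)
  have hE1 : 1 ≤ E := by
    rw [← ENNReal.ofReal_one]; exact ENNReal.ofReal_le_ofReal (one_le_exp hε)
  have hE : E ≠ ∞ := ENNReal.ofReal_ne_top
  set pt := fun a => min (p a) (E * q a)
  set qt := fun a => min (q a) (E * p a)
  have hpt : ∑' a, pt a + ∑' a, (p a - E * q a) = 1 := by
    rw [← ENNReal.tsum_add, ← p.tsum_coe]
    exact tsum_congr fun a => by rw [add_comm]; exact tsub_add_min
  have hqt : ∑' a, qt a + ∑' a, (q a - E * p a) = 1 := by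
    rw [← ENNReal.tsum_add, ← q.tsum_coe]
    exact tsum_congr fun a => by rw [add_comm]; exact tsub_add_min
  obtain ⟨p', hp'pt, hqtp', hmass, hremoved⟩ := ENNReal.exists_tsum_le_of_le_mul hE1 hE
    (fun a => ENNReal.min_mul_le_mul_min hE1)
    (ne_top_of_le_ne_top ENNReal.one_ne_top (hpt ▸ le_self_add))
  refine ⟨p', qt, fun a => (hp'pt a).trans (ENNReal.min_mul_le_mul_min hE1), hqtp', hmass,
    fun a => (hp'pt a).trans (min_le_left _ _), fun a => min_le_left _ _, ?_⟩
  calc ∑' a, (p a - p' a) ≤ ∑' a, ((p a - E * q a) + (pt a - p' a)) :=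
        ENNReal.tsum_le_tsum fun a => tsub_le_tsub_add_tsub.trans_eq (by rw [tsub_min])
    _ ≤ ∑' a, (p a - E * q a) + (∑' a, pt a - ∑' a, qt a) := by
        rw [ENNReal.tsum_add]; exact add_le_add le_rfl hremoved
    _ ≤ ENNReal.ofReal δ :=
        ENNReal.add_tsub_le_of_add_eq (hpt.trans hqt.symm)
          (ne_top_of_le_ne_top ENNReal.one_ne_top (hqt ▸ le_self_add))
          (PMF.tsum_tsub_mul_le_of_toOuterMeasure_le hE fun S => (h S).1)
          (PMF.tsum_tsub_mul_le_of_toOuterMeasure_le hE fun S => (h S).2)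

theorem ENNReal.rpow_mul_tsum_indicator_lt_le {α : Type*} (f R : α → ℝ≥0∞) (γ : ℝ≥0∞) {l : ℝ}
    (hl : 0 ≤ l) : γ ^ l * ∑' v, {v | γ < R v}.indicator f v ≤ ∑' v, f v * R v ^ l := by
  rw [← ENNReal.tsum_mul_left]
  refine ENNReal.tsum_le_tsum fun v => ?_
  by_cases hv : γ < R v
  · rw [Set.indicator_of_mem (show v ∈ {v | γ < R v} from hv), mul_comm]
    gcongr
  · simp [hv]

theorem chernoff_exponent_eq {k ε μ L : ℝ} (hk : 0 < k) (hε : 0 < ε) (hL : 0 ≤ L) :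
    k * (√(2 * k * L) / (k * ε) * μ + (√(2 * k * L) / (k * ε)) ^ 2 * ε ^ 2 / 2)
      = (μ * k + ε * √(2 * k * L)) * (√(2 * k * L) / (k * ε)) - L := by
  have hs : √(2 * k * L) ^ 2 = 2 * k * L := sq_sqrt (by positivity)
  generalize √(2 * k * L) = s at hs ⊢
  field_simp
  linear_combination (-ε) * hs

noncomputable def advancedEps (ε : ℝ) (k : ℕ) (δhat : ℝ) : ℝ :=
  ε * (exp ε - 1) * k + ε * √(2 * k * log (1 / δhat))

theorem advancedEps_nonneg {ε : ℝ} (hε : 0 ≤ ε) (k : ℕ) (δhat : ℝ) : 0 ≤ advancedEps ε k δhat := by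
  have : 0 ≤ exp ε - 1 := by linarith [one_le_exp hε]
  unfold advancedEps
  positivity

section tail

variable {k : ℕ} {p q : (i : Fin k) → (Fin i → Ω) → Ω → ℝ≥0∞} {ε δhat : ℝ}

theorem tsum_indicator_lt_prodWeight_div_le_of_pos (hε : 0 < ε) (hk : 0 < k) (hδhat : 0 < δhat)
    (hδhat1 : δhat ≤ 1) (hpq : ∀ i w a, p i w a ≤ ENNReal.ofReal (exp ε) * q i w a)
    (hqp : ∀ i w a, q i w a ≤ ENNReal.ofReal (exp ε) * p i w a)
    (hmass : ∀ i w, ∑' a, p i w a ≤ ∑' a, q i w a) (hp1 : ∀ i w, ∑' a, p i w a ≤ 1) :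
    ∑' v, {v | ENNReal.ofReal (exp (advancedEps ε k δhat)) <
      prodWeight (fun i w a => p i w a / q i w a) v}.indicator (prodWeight p) v
      ≤ ENNReal.ofReal δhat := by
  set L := log (1 / δhat)
  have hL : 0 ≤ L := log_nonneg ((one_le_div hδhat).2 hδhat1)
  have hk' : (0 : ℝ) < k := Nat.cast_pos.2 hk
  -- the exponent of the Chernoff bound is minimised at this `l`
  set l := √(2 * k * L) / (k * ε)
  have hl : 0 ≤ l := by positivity
  set γ := ENNReal.ofReal (exp (advancedEps ε k δhat))
  have hγ0 : γ ^ l ≠ 0 :=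
    (ENNReal.rpow_pos (ENNReal.ofReal_pos.2 (exp_pos _)) ENNReal.ofReal_ne_top).ne'
  have hγ : γ ^ l ≠ ∞ := ENNReal.rpow_ne_top_of_nonneg hl ENNReal.ofReal_ne_top
  refine (ENNReal.mul_le_mul_iff_right hγ0 hγ).1 ?_
  calc γ ^ l * _
      ≤ ∑' v, prodWeight p v * prodWeight (fun i w a => p i w a / q i w a) v ^ l :=
        ENNReal.rpow_mul_tsum_indicator_lt_le _ _ _ hl
    _ = ∑' v, prodWeight (fun i w a => p i w a * (p i w a / q i w a) ^ l) v := by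
        simp only [prodWeight_mul_rpow _ _ hl]
    _ ≤ ENNReal.ofReal (exp (l * (ε * (exp ε - 1)) + l ^ 2 * ε ^ 2 / 2)) ^ k :=
        tsum_prodWeight_le_pow fun i w =>
          ENNReal.tsum_mul_rpow_div_le hε hl (hpq i w) (hqp i w) (hmass i w) (hp1 i w)
    _ = γ ^ l * ENNReal.ofReal δhat := by
        rw [← ENNReal.ofReal_pow (exp_pos _).le, ← exp_nat_mul,
          ENNReal.ofReal_rpow_of_pos (exp_pos _), ← exp_mul, ← ENNReal.ofReal_mul (exp_pos _).le]
        congr 1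
        rw [show (k : ℝ) * (l * (ε * (exp ε - 1)) + l ^ 2 * ε ^ 2 / 2)
            = advancedEps ε k δhat * l - L from chernoff_exponent_eq hk' hε hL,
          exp_sub, exp_log (one_div_pos.2 hδhat), div_div_eq_mul_div, div_one]

theorem tsum_indicator_lt_prodWeight_div_le (hε : 0 ≤ ε) (hδhat : 0 < δhat)
    (hpq : ∀ i w a, p i w a ≤ ENNReal.ofReal (exp ε) * q i w a)
    (hqp : ∀ i w a, q i w a ≤ ENNReal.ofReal (exp ε) * p i w a)
    (hmass : ∀ i w, ∑' a, p i w a ≤ ∑' a, q i w a) (hp1 : ∀ i w, ∑' a, p i w a ≤ 1) :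
    ∑' v, {v | ENNReal.ofReal (exp (advancedEps ε k δhat)) <
      prodWeight (fun i w a => p i w a / q i w a) v}.indicator (prodWeight p) v
      ≤ ENNReal.ofReal δhat := by
  rcases le_or_gt 1 δhat with hδhat1 | hδhat1
  · calc _ ≤ ∑' v, prodWeight p v := ENNReal.tsum_le_tsum fun v => Set.indicator_le_self _ _ v
      _ ≤ 1 := by simpa using tsum_prodWeight_le_pow hp1
      _ ≤ ENNReal.ofReal δhat := by simpa using ENNReal.ofReal_le_ofReal hδhat1
  by_cases hεk : ε * k = 0
  · -- the loss ratio is at most `exp (ε k) = 1`, so the event is empty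
    have hR v : prodWeight (fun i w a => p i w a / q i w a) v ≤
        ENNReal.ofReal (exp (advancedEps ε k δhat)) :=
      calc _ ≤ prodWeight (fun _ _ _ => ENNReal.ofReal (exp ε)) v :=
            prodWeight_mono (fun i w a => ENNReal.div_le_of_le_mul (hpq i w a)) v
        _ = 1 := by
            rw [prodWeight, Finset.prod_const, Finset.card_univ, Fintype.card_fin,
              ← ENNReal.ofReal_pow (exp_pos ε).le, ← exp_nat_mul, mul_comm, hεk, exp_zero,
              ENNReal.ofReal_one]
        _ ≤ _ := by
            rw [← ENNReal.ofReal_one]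
            exact ENNReal.ofReal_le_ofReal (one_le_exp (advancedEps_nonneg hε k δhat))
    simp [Set.indicator_of_notMem, not_lt.2 (hR _)]
  · exact tsum_indicator_lt_prodWeight_div_le_of_pos (hε.lt_of_ne (by rintro rfl; simp at hεk))
      (Nat.pos_of_ne_zero (by rintro rfl; simp at hεk)) hδhat hδhat1.le hpq hqp hmass hp1

end tail

section view

variable {k : ℕ} {κ : (i : Fin k) → (Fin i → Ω) → PMF Ω}
  {p q : (i : Fin k) → (Fin i → Ω) → Ω → ℝ≥0∞}

theorem toOuterMeasure_view_le_tsum_indicator_add {η : ℝ≥0∞} (hp1 : ∀ i w, ∑' a, p i w a ≤ 1)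
    (hclose : ∀ i w, ∑' a, (κ i w a - p i w a) ≤ η) (S : Set (Fin k → Ω)) :
    (view k κ).toOuterMeasure S ≤ ∑' v, S.indicator (prodWeight p) v + k * η := by
  rw [toOuterMeasure_view]
  calc ∑' v, S.indicator (prodWeight fun i w => κ i w) v
      ≤ ∑' v, (S.indicator (prodWeight p) v + (prodWeight (fun i w => κ i w) v - prodWeight p v)) :=
        ENNReal.tsum_le_tsum fun v => by by_cases hv : v ∈ S <;> simp [hv, le_add_tsub]
    _ ≤ ∑' v, S.indicator (prodWeight p) v + k * η := by
        rw [ENNReal.tsum_add]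
        gcongr
        exact tsum_prodWeight_tsub_le (fun i w => (κ i w).tsum_coe.le) hp1 hclose

theorem tsum_indicator_diff_le_mul_toOuterMeasure_view (hpq : ∀ i w a, q i w a = 0 → p i w a = 0)
    (hqκ : ∀ i w a, q i w a ≤ κ i w a) (γ : ℝ≥0∞) (S : Set (Fin k → Ω)) :
    ∑' v, (S \ {v | γ < prodWeight (fun i w a => p i w a / q i w a) v}).indicator (prodWeight p) v
      ≤ γ * (view k κ).toOuterMeasure S := by
  rw [toOuterMeasure_view, ← ENNReal.tsum_mul_left]
  refine ENNReal.tsum_le_tsum fun v => ?_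
  by_cases hv : v ∈ S \ {v | γ < prodWeight (fun i w a => p i w a / q i w a) v}
  · rw [Set.indicator_of_mem hv, Set.indicator_of_mem hv.1]
    calc prodWeight p v ≤ prodWeight (fun i w a => p i w a / q i w a) v * prodWeight q v :=
          prodWeight_le_prodWeight_div_mul hpq (fun i w a => ne_top_of_le_ne_top
            ENNReal.one_ne_top ((hqκ i w a).trans (PMF.coe_le_one _ a))) v
      _ ≤ γ * prodWeight (fun i w => κ i w) v := by
          gcongr
          · exact not_lt.1 hv.2
          · exact prodWeight_mono hqκ v
  · simp [Set.indicator_of_notMem hv]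

end view

theorem toOuterMeasure_view_le {k : ℕ} {κ0 κ1 : (i : Fin k) → (Fin i → Ω) → PMF Ω} {ε δ δhat : ℝ}
    (hε : 0 ≤ ε) (hδ : 0 ≤ δ) (hδhat : 0 < δhat)
    (hind : ∀ i w, Indist (κ0 i w) (κ1 i w) ε δ) (S : Set (Fin k → Ω)) :
    (view k κ0).toOuterMeasure S ≤ ENNReal.ofReal (exp (advancedEps ε k δhat)) *
      (view k κ1).toOuterMeasure S + ENNReal.ofReal (k * δ + δhat) := by
  choose p q hpq hqp hmass hp hq hclose using fun i w => (hind i w).exists_pure hε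
  have hp1 i w : ∑' a, p i w a ≤ 1 := (ENNReal.tsum_le_tsum (hp i w)).trans (κ0 i w).tsum_coe.le
  set γ := ENNReal.ofReal (exp (advancedEps ε k δhat))
  set B := {v | γ < prodWeight (fun i w a => p i w a / q i w a) v}
  calc (view k κ0).toOuterMeasure S
      ≤ ∑' v, S.indicator (prodWeight p) v + k * ENNReal.ofReal δ :=
        toOuterMeasure_view_le_tsum_indicator_add hp1 hclose S
    _ ≤ ∑' v, ((S \ B).indicator (prodWeight p) v + B.indicator (prodWeight p) v)
          + k * ENNReal.ofReal δ := by
        gcongr with v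
        by_cases hv : v ∈ B <;> by_cases hvS : v ∈ S <;> simp [hv, hvS]
    _ ≤ γ * (view k κ1).toOuterMeasure S + ENNReal.ofReal δhat + k * ENNReal.ofReal δ := by
        rw [ENNReal.tsum_add]
        gcongr
        · exact tsum_indicator_diff_le_mul_toOuterMeasure_view
            (fun i w a h => by simpa [h] using hpq i w a) hq γ S
        · exact tsum_indicator_lt_prodWeight_div_le hε hδhat hpq hqp hmass hp1
    _ = γ * (view k κ1).toOuterMeasure S + ENNReal.ofReal (k * δ + δhat) := by
        rw [ENNReal.ofReal_add (by positivity) hδhat.le, ENNReal.ofReal_mul (Nat.cast_nonneg k),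
          ENNReal.ofReal_natCast, add_assoc, add_comm (ENNReal.ofReal δhat)]

theorem advanced_composition_general (k : ℕ)
    (κ0 κ1 : (i : Fin k) → (Fin i → Ω) → PMF Ω)
    (ε δ : ℝ) (hε : 0 ≤ ε) (hδ0 : 0 ≤ δ)
    (hind : ∀ (i : Fin k) (w : Fin i → Ω), Indist (κ0 i w) (κ1 i w) ε δ)
    (δhat : ℝ) (hδhat : 0 < δhat) :
    Indist (view k κ0) (view k κ1)
      (ε * (Real.exp ε - 1) * k + ε * Real.sqrt (2 * k * Real.log (1 / δhat)))
      (k * δ + δhat) :=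
  fun S => ⟨toOuterMeasure_view_le hε hδ0 hδhat hind S,
    toOuterMeasure_view_le hε hδ0 hδhat (fun i w => (hind i w).symm) S⟩

/-- Advanced composition (Dwork–Rothblum–Vadhan): if every round is `(ε,δ)`-DP with
the same fixed `ε ≥ 0` and `δ ∈ [0,1)`, then for every `δ̂ > 0` the views `V^0` and
`V^1` are `(ε(e^ε−1)k + ε√(2k log(1/δ̂)), kδ + δ̂)`-indistinguishable. -/
theorem advanced_composition [Countable Ω] (k : ℕ)
    (κ0 κ1 : (i : Fin k) → (Fin i → Ω) → PMF Ω)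
    (ε δ : ℝ) (hε : 0 ≤ ε) (hδ0 : 0 ≤ δ) (hδ1 : δ < 1)
    (hind : ∀ (i : Fin k) (w : Fin i → Ω), Indist (κ0 i w) (κ1 i w) ε δ)
    (δhat : ℝ) (hδhat : 0 < δhat) :
    Indist (view k κ0) (view k κ1)
      (ε * (Real.exp ε - 1) * k + ε * Real.sqrt (2 * k * Real.log (1 / δhat)))
      (k * δ + δhat) :=
  advanced_composition_general k κ0 κ1 ε δ hε hδ0 hind δhat hδhat

end AdaptiveComp
end

section
/- Expected privacy loss bound (Dwork–Rothblum): let p and q be PMFs on a countable type Y and ε ≥ 0, and suppose that for every a ∈ Y, p(a) ≤ e^ε·q(a) and q(a) ≤ e^ε·p(a). Then the Kullback–Leibler-type expectation satisfies Σ_{a∈Y} p(a)·log(p(a)/q(a)) ≤ ε·(e^ε − 1)/2. -/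
open scoped ENNReal

private lemma mono_from_deriv {F F' : ℝ → ℝ}
    (hF : ∀ x, HasDerivAt F (F' x) x)
    (hF' : ∀ x, 0 ≤ x → 0 ≤ F' x) {a b : ℝ} (ha : 0 ≤ a) (hab : a ≤ b) :
    F a ≤ F b := by
  have hmono : MonotoneOn F (Set.Ici (0:ℝ)) := by
    apply monotoneOn_of_deriv_nonneg (convex_Ici 0)
    · exact fun x _ => (hF x).continuousAt.continuousWithinAt
    · exact fun x _ => (hF x).differentiableAt.differentiableWithinAt
    · intro x hx
      rw [(hF x).deriv]
      rw [interior_Ici] at hx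
      exact hF' x (le_of_lt hx)
  exact hmono (Set.mem_Ici.2 ha) (Set.mem_Ici.2 (ha.trans hab)) hab

private lemma two_mul_le_exp_sub {ε : ℝ} (hε : 0 ≤ ε) :
    2 * ε + Real.exp (-ε) ≤ Real.exp ε := by
  have key : (fun x : ℝ => Real.exp x - Real.exp (-x) - (x + x)) 0
      ≤ (fun x : ℝ => Real.exp x - Real.exp (-x) - (x + x)) ε := by
    apply mono_from_deriv (F' := fun x => Real.exp x - Real.exp (-x) * (-1) - (1 + 1))
      (fun x => (((Real.hasDerivAt_exp x).sub ((hasDerivAt_neg x).exp)).sub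
        ((hasDerivAt_id' x).add (hasDerivAt_id' x)))) _ le_rfl hε
    intro x hx
    have h1 : Real.exp x * Real.exp (-x) = 1 := by
      rw [← Real.exp_add]; simp
    nlinarith [sq_nonneg (Real.exp x - 1), Real.exp_pos x]
  simp only at key
  simp only [neg_zero, Real.exp_zero] at key
  linarith

private lemma psi_bound {ε u : ℝ} (hε : 0 ≤ ε) (hu1 : -ε ≤ u) (hu2 : u ≤ ε) :
    u + Real.exp (-u) ≤ Real.exp ε - ε := by
  rcases le_or_gt u 0 with hu | hu
  · -- use monotonicity of exp x - x on [0, ∞) with a = -u, b = ε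
    have key : (fun x : ℝ => Real.exp x - x) (-u) ≤ (fun x : ℝ => Real.exp x - x) ε := by
      apply mono_from_deriv (F' := fun x => Real.exp x - 1)
        (fun x => (Real.hasDerivAt_exp x).sub (hasDerivAt_id' x)) _ (by linarith) (by linarith)
      intro x hx
      have := Real.add_one_le_exp x
      linarith
    simp only at key
    linarith
  · -- u ≥ 0 : x + exp(-x) is monotone on [0,∞); then use two_mul_le_exp_sub
    have key : (fun x : ℝ => x + Real.exp (-x)) u ≤ (fun x : ℝ => x + Real.exp (-x)) ε := by
      apply mono_from_deriv (F' := fun x => 1 + Real.exp (-x) * (-1))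
        (fun x => (hasDerivAt_id' x).add ((hasDerivAt_neg x).exp)) _ hu.le hu2
      intro x hx
      have : Real.exp (-x) ≤ 1 := Real.exp_le_one_iff.2 (by linarith)
      linarith
    simp only at key
    have := two_mul_le_exp_sub hε
    linarith

private lemma final_ineq {ε : ℝ} (hε : 0 ≤ ε) :
    Real.exp ε - ε - 1 ≤ ε * (Real.exp ε - 1) / 2 := by
  have key : (fun x : ℝ => x * (Real.exp x - 1) / 2 - (Real.exp x - x - 1)) 0
      ≤ (fun x : ℝ => x * (Real.exp x - 1) / 2 - (Real.exp x - x - 1)) ε := by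
    apply mono_from_deriv
      (F' := fun x => (1 * (Real.exp x - 1) + x * Real.exp x) / 2 - (Real.exp x - 1))
      (fun x => ((((hasDerivAt_id' x).mul ((Real.hasDerivAt_exp x).sub_const 1)).div_const 2).sub
        (((Real.hasDerivAt_exp x).sub (hasDerivAt_id' x)).sub_const 1))) _ le_rfl hε
    · intro x hx
      have h1 : Real.exp x * Real.exp (-x) = 1 := by rw [← Real.exp_add]; simp
      have h2 : -x + 1 ≤ Real.exp (-x) := Real.add_one_le_exp (-x)
      have h3 : Real.exp x * (-x + 1) ≤ Real.exp x * Real.exp (-x) :=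
        mul_le_mul_of_nonneg_left h2 (Real.exp_pos x).le
      nlinarith [Real.exp_pos x]
  simp only at key
  simp only [Real.exp_zero] at key
  linarith

private lemma pointwise_bound {ε x y : ℝ} (hε : 0 ≤ ε) (hx : 0 ≤ x) (hy : 0 ≤ y)
    (h1 : x ≤ Real.exp ε * y) (h2 : y ≤ Real.exp ε * x) :
    x * Real.log (x / y) ≤ (Real.exp ε - ε - 1) * x + (x - y) := by
  rcases eq_or_lt_of_le hx with hx0 | hx0
  · -- x = 0 forces y = 0
    have hy0 : y = 0 := le_antisymm (by rw [← hx0] at h2; simpa using h2) hy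
    rw [← hx0, hy0]; simp
  · have hy0 : 0 < y := by
      by_contra h
      push_neg at h
      have : y = 0 := le_antisymm h hy
      rw [this] at h1
      simp at h1
      linarith
    have hdiv : 0 < x / y := div_pos hx0 hy0
    set u := Real.log (x / y) with hu
    have hxy : x / y = Real.exp u := (Real.exp_log hdiv).symm
    have hyx : y = x * Real.exp (-u) := by
      rw [Real.exp_neg, ← hxy]
      field_simp
    have hu2 : u ≤ ε := by
      rw [hu, Real.log_le_iff_le_exp hdiv, div_le_iff₀ hy0]
      linarith
    have hu1 : -ε ≤ u := by
      rw [hu, Real.le_log_iff_exp_le hdiv, le_div_iff₀ hy0, Real.exp_neg]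
      rw [← sub_nonneg]
      have hepos : (0:ℝ) < Real.exp ε := Real.exp_pos ε
      have : Real.exp ε * x - y ≥ 0 := by linarith
      calc (0:ℝ) ≤ (Real.exp ε * x - y) / Real.exp ε := by positivity
        _ = x - (Real.exp ε)⁻¹ * y := by field_simp
    have hpsi := psi_bound hε hu1 hu2
    have := mul_le_mul_of_nonneg_left hpsi hx0.le
    rw [hyx]
    nlinarith

/-- Expected privacy loss bound (Dwork–Rothblum): if `p a ≤ e^ε · q a` and
`q a ≤ e^ε · p a` for every `a`, then `Σ_a p(a)·log(p(a)/q(a)) ≤ ε·(e^ε − 1)/2`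
(terms with `p a = 0` contribute `0`). -/
theorem expected_privacy_loss_bound {Y : Type*} [Countable Y]
    (p q : PMF Y) (ε : ℝ) (hε : 0 ≤ ε)
    (hpt : ∀ a : Y,
      p a ≤ ENNReal.ofReal (Real.exp ε) * q a ∧
      q a ≤ ENNReal.ofReal (Real.exp ε) * p a) :
    ∑' a : Y, (p a).toReal * Real.log ((p a).toReal / (q a).toReal) ≤
      ε * (Real.exp ε - 1) / 2 := by
  set P : Y → ℝ := fun a => (p a).toReal with hP
  set Q : Y → ℝ := fun a => (q a).toReal with hQ
  set c : ℝ := Real.exp ε - ε - 1 with hc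
  have hr : ∀ a : Y, P a ≤ Real.exp ε * Q a ∧ Q a ≤ Real.exp ε * P a := by
    intro a
    constructor
    · have h := (hpt a).1
      have := ENNReal.toReal_mono (by
        exact ENNReal.mul_ne_top ENNReal.ofReal_ne_top (q.apply_ne_top a)) h
      rwa [ENNReal.toReal_mul, ENNReal.toReal_ofReal (Real.exp_pos ε).le] at this
    · have h := (hpt a).2
      have := ENNReal.toReal_mono (by
        exact ENNReal.mul_ne_top ENNReal.ofReal_ne_top (p.apply_ne_top a)) h
      rwa [ENNReal.toReal_mul, ENNReal.toReal_ofReal (Real.exp_pos ε).le] at this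
  have hPsum : Summable P := ENNReal.summable_toReal (by rw [p.tsum_coe]; exact ENNReal.one_ne_top)
  have hQsum : Summable Q := ENNReal.summable_toReal (by rw [q.tsum_coe]; exact ENNReal.one_ne_top)
  have hPt : ∑' a, P a = 1 := by
    rw [hP, ← ENNReal.tsum_toReal_eq (fun a => p.apply_ne_top a), p.tsum_coe, ENNReal.toReal_one]
  have hQt : ∑' a, Q a = 1 := by
    rw [hQ, ← ENNReal.tsum_toReal_eq (fun a => q.apply_ne_top a), q.tsum_coe, ENNReal.toReal_one]
  set f : Y → ℝ := fun a => P a * Real.log (P a / Q a) with hf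
  set g : Y → ℝ := fun a => c * P a + (P a - Q a) with hg
  have hPnn : ∀ a, 0 ≤ P a := fun a => ENNReal.toReal_nonneg
  have hQnn : ∀ a, 0 ≤ Q a := fun a => ENNReal.toReal_nonneg
  have hle : ∀ a, f a ≤ g a := fun a =>
    pointwise_bound hε (hPnn a) (hQnn a) (hr a).1 (hr a).2
  have habs : ∀ a, |f a| ≤ ε * P a := by
    intro a
    rcases eq_or_lt_of_le (hPnn a) with h0 | h0
    · simp [hf, ← h0]
    · have hQ0 : 0 < Q a := by
        by_contra h
        push_neg at h
        have hq0 : Q a = 0 := le_antisymm h (hQnn a)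
        have := (hr a).1
        rw [hq0] at this
        simp at this
        linarith
      have hdiv : 0 < P a / Q a := div_pos h0 hQ0
      have hlogle : Real.log (P a / Q a) ≤ ε := by
        rw [Real.log_le_iff_le_exp hdiv, div_le_iff₀ hQ0]
        have := (hr a).1
        nlinarith [Real.exp_pos ε]
      have hlogge : -ε ≤ Real.log (P a / Q a) := by
        rw [Real.le_log_iff_exp_le hdiv, le_div_iff₀ hQ0, Real.exp_neg]
        have h2 := (hr a).2
        have hepos : (0:ℝ) < Real.exp ε := Real.exp_pos ε
        rw [← sub_nonneg]
        calc (0:ℝ) ≤ (Real.exp ε * P a - Q a) / Real.exp ε := by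
              apply div_nonneg _ hepos.le; linarith
          _ = P a - (Real.exp ε)⁻¹ * Q a := by field_simp
      have : |Real.log (P a / Q a)| ≤ ε := abs_le.2 ⟨hlogge, hlogle⟩
      calc |f a| = P a * |Real.log (P a / Q a)| := by
            rw [hf, abs_mul, abs_of_nonneg (hPnn a)]
        _ ≤ P a * ε := mul_le_mul_of_nonneg_left this (hPnn a)
        _ = ε * P a := mul_comm _ _
  have hfsum : Summable f := by
    apply Summable.of_abs
    exact Summable.of_nonneg_of_le (fun a => abs_nonneg _) habs (hPsum.mul_left ε)
  have hgsum : Summable g := (hPsum.mul_left c).add (hPsum.sub hQsum)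
  have hmain : ∑' a, f a ≤ ∑' a, g a := Summable.tsum_le_tsum hle hfsum hgsum
  have hgt : ∑' a, g a = c := by
    rw [hg, Summable.tsum_add (hPsum.mul_left c) (hPsum.sub hQsum), tsum_mul_left,
      Summable.tsum_sub hPsum hQsum, hPt, hQt]
    ring
  calc ∑' a, f a ≤ c := by rw [← hgt]; exact hmain
    _ ≤ ε * (Real.exp ε - 1) / 2 := final_ineq hε
end

section
/- Self-normalized concentration (Peña–Klass–Lai): let A and B be random variables on a probability space with B > 0 almost surely, and suppose E[exp(λA − (λ²/2)B²)] ≤ 1 for every λ ∈ ℝ. Then for every δ ∈ (0, 1/e] and every β > 0, P( |A| ≥ √( (B² + β)·(2 + log(B²/β + 1))·log(1/δ) ) ) ≤ δ. -/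
/-!
Method of mixtures. Integrating `exp (λ A - λ² B² / 2)` against the centred normal density of
variance `β⁻¹` in `λ` gives, by Tonelli, a random variable of expectation at most `1`; completing
the square evaluates it as `√(β / (B² + β)) * exp (A² / (2 (B² + β)))`. On the event in question
this is at least `1 / δ` (here `log (1 / δ) ≥ 1` is used to absorb the factor `√(β / (B² + β))`),
so Markov's inequality bounds the probability of the event by `δ`.
-/

open MeasureTheory Real

lemma exp_neg_mul_sq_add_mul_eq {b : ℝ} (hb : b ≠ 0) (a x : ℝ) :
    exp (-b * x ^ 2 + a * x) = exp (a ^ 2 / (4 * b)) * exp (-b * (x - a / (2 * b)) ^ 2) := by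
  rw [← exp_add]
  congr 1
  field_simp
  ring

lemma integrable_exp_neg_mul_sq_add_mul {b : ℝ} (hb : 0 < b) (a : ℝ) :
    Integrable fun x : ℝ => exp (-b * x ^ 2 + a * x) := by
  simp_rw [exp_neg_mul_sq_add_mul_eq hb.ne' a]
  exact ((integrable_exp_neg_mul_sq hb).comp_sub_right _).const_mul _

lemma integral_exp_neg_mul_sq_add_mul {b : ℝ} (hb : 0 < b) (a : ℝ) :
    ∫ x : ℝ, exp (-b * x ^ 2 + a * x) = √(π / b) * exp (a ^ 2 / (4 * b)) := by
  simp_rw [exp_neg_mul_sq_add_mul_eq hb.ne' a]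
  rw [integral_const_mul, integral_sub_right_eq_self (fun x => exp (-b * x ^ 2)),
    integral_gaussian, mul_comm]

noncomputable def mixingDensity (β l : ℝ) : ℝ := √(β / (2 * π)) * exp (-(β / 2) * l ^ 2)

noncomputable def gaussianMixture (β a b : ℝ) : ℝ :=
  √(β / (b ^ 2 + β)) * exp (a ^ 2 / (2 * (b ^ 2 + β)))

lemma mixingDensity_mul_exp (β a b l : ℝ) :
    mixingDensity β l * exp (l * a - l ^ 2 / 2 * b ^ 2)
      = √(β / (2 * π)) * exp (-((b ^ 2 + β) / 2) * l ^ 2 + a * l) := by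
  rw [mixingDensity, mul_assoc, ← exp_add]
  ring_nf

lemma lintegral_mixingDensity_mul_exp {β : ℝ} (hβ : 0 < β) (a b : ℝ) :
    ∫⁻ l, ENNReal.ofReal (mixingDensity β l * exp (l * a - l ^ 2 / 2 * b ^ 2))
      = ENNReal.ofReal (gaussianMixture β a b) := by
  have hs : 0 < (b ^ 2 + β) / 2 := by positivity
  simp_rw [mixingDensity_mul_exp]
  rw [← ofReal_integral_eq_lintegral_ofReal
      ((integrable_exp_neg_mul_sq_add_mul hs a).const_mul _)
      (Filter.Eventually.of_forall fun l => by positivity),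
    integral_const_mul, integral_exp_neg_mul_sq_add_mul hs, ← mul_assoc,
    ← sqrt_mul (by positivity), gaussianMixture]
  congr 3
  · field_simp
  · ring

lemma lintegral_mixingDensity {β : ℝ} (hβ : 0 < β) :
    ∫⁻ l, ENNReal.ofReal (mixingDensity β l) = 1 := by
  simpa [gaussianMixture, hβ.ne'] using lintegral_mixingDensity_mul_exp hβ 0 0

lemma lintegral_gaussianMixture_le_one {Ω : Type*} [MeasurableSpace Ω] {μ : Measure Ω}
    [SFinite μ] {A B : Ω → ℝ} (hA : Measurable A) (hB : Measurable B)
    (hexp : ∀ l : ℝ,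
      ∫⁻ ω, ENNReal.ofReal (exp (l * A ω - l ^ 2 / 2 * (B ω) ^ 2)) ∂μ ≤ 1)
    {β : ℝ} (hβ : 0 < β) :
    ∫⁻ ω, ENNReal.ofReal (gaussianMixture β (A ω) (B ω)) ∂μ ≤ 1 := by
  have hmeas : Measurable fun p : Ω × ℝ =>
      ENNReal.ofReal (mixingDensity β p.2 * exp (p.2 * A p.1 - p.2 ^ 2 / 2 * B p.1 ^ 2)) := by
    unfold mixingDensity; fun_prop
  calc ∫⁻ ω, ENNReal.ofReal (gaussianMixture β (A ω) (B ω)) ∂μ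
      = ∫⁻ ω, ∫⁻ l, ENNReal.ofReal (mixingDensity β l * exp (l * A ω - l ^ 2 / 2 * B ω ^ 2))
          ∂volume ∂μ := by
        simp_rw [lintegral_mixingDensity_mul_exp hβ]
    _ = ∫⁻ l, ∫⁻ ω, ENNReal.ofReal (mixingDensity β l * exp (l * A ω - l ^ 2 / 2 * B ω ^ 2))
          ∂μ ∂volume :=
        lintegral_lintegral_swap hmeas.aemeasurable
    _ = ∫⁻ l, ENNReal.ofReal (mixingDensity β l) *
          ∫⁻ ω, ENNReal.ofReal (exp (l * A ω - l ^ 2 / 2 * B ω ^ 2)) ∂μ := by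
        refine lintegral_congr fun l => ?_
        simp_rw [ENNReal.ofReal_mul (by unfold mixingDensity; positivity : 0 ≤ mixingDensity β l)]
        exact lintegral_const_mul' _ _ ENNReal.ofReal_ne_top
    _ ≤ ∫⁻ l, ENNReal.ofReal (mixingDensity β l) := by
        gcongr with l
        exact mul_le_of_le_one_right' (hexp l)
    _ = 1 := lintegral_mixingDensity hβ

lemma gaussianMixture_eq_exp {β : ℝ} (hβ : 0 < β) (a b : ℝ) :
    gaussianMixture β a b = exp (a ^ 2 / (2 * (b ^ 2 + β)) - log (b ^ 2 / β + 1) / 2) := by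
  have hratio : β / (b ^ 2 + β) = (b ^ 2 / β + 1)⁻¹ := by field_simp
  rw [gaussianMixture, hratio, sqrt_eq_rpow, rpow_def_of_pos (by positivity), log_inv,
    ← exp_add]
  ring_nf

lemma exp_le_gaussianMixture {β L a b : ℝ} (hβ : 0 < β) (hL : 1 ≤ L)
    (h : √((b ^ 2 + β) * (2 + log (b ^ 2 / β + 1)) * L) ≤ |a|) :
    exp L ≤ gaussianMixture β a b := by
  set s := b ^ 2 + β
  set r := log (b ^ 2 / β + 1)
  have hs : 0 < s := by positivity
  have hr : 0 ≤ r := log_nonneg (by simp only [le_add_iff_nonneg_left]; positivity)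
  have hsq : s * (2 + r) * L ≤ a ^ 2 := by
    rw [← sq_abs a, ← sq_sqrt (by positivity : 0 ≤ s * (2 + r) * L)]
    gcongr
  rw [gaussianMixture_eq_exp hβ, exp_le_exp, le_sub_iff_add_le, le_div_iff₀ (by positivity)]
  nlinarith [mul_nonneg (mul_nonneg hs.le hr) (sub_nonneg.mpr hL)]

theorem pena_klass_lai_self_normalized_general
    {Ω : Type*} [MeasurableSpace Ω] (μ : Measure Ω) [IsProbabilityMeasure μ]
    (A B : Ω → ℝ) (hA : Measurable A) (hB : Measurable B)
    (hexp : ∀ l : ℝ,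
      ∫⁻ ω, ENNReal.ofReal (Real.exp (l * A ω - l ^ 2 / 2 * (B ω) ^ 2)) ∂μ ≤ 1)
    (δ β : ℝ) (hδ0 : 0 < δ) (hδ1 : δ ≤ (Real.exp 1)⁻¹) (hβ : 0 < β) :
    μ {ω | Real.sqrt (((B ω) ^ 2 + β) * (2 + Real.log ((B ω) ^ 2 / β + 1)) *
        Real.log (1 / δ)) ≤ |A ω|} ≤ ENNReal.ofReal δ := by
  have hL : 1 ≤ log (1 / δ) := by
    rw [le_log_iff_exp_le (by positivity), one_div]
    exact (le_inv_comm₀ hδ0 (exp_pos 1)).mp hδ1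
  have hM : Measurable fun ω => ENNReal.ofReal (gaussianMixture β (A ω) (B ω)) := by
    unfold gaussianMixture; fun_prop
  have hδ' : ENNReal.ofReal (1 / δ) ≠ 0 := by positivity
  calc _ ≤ μ {ω | ENNReal.ofReal (1 / δ) ≤ ENNReal.ofReal (gaussianMixture β (A ω) (B ω))} :=
        measure_mono fun ω hω => ENNReal.ofReal_le_ofReal <| by
          simpa only [exp_log (one_div_pos.2 hδ0)] using exp_le_gaussianMixture hβ hL hω
    _ ≤ (∫⁻ ω, ENNReal.ofReal (gaussianMixture β (A ω) (B ω)) ∂μ) / ENNReal.ofReal (1 / δ) :=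
        meas_ge_le_lintegral_div hM.aemeasurable hδ' ENNReal.ofReal_ne_top
    _ ≤ 1 / ENNReal.ofReal (1 / δ) := by
        gcongr
        exact lintegral_gaussianMixture_le_one hA hB hexp hβ
    _ = ENNReal.ofReal δ := by
        rw [one_div, one_div, ← ENNReal.ofReal_inv_of_pos (by positivity), inv_inv]

/-- Self-normalized concentration (Peña–Klass–Lai): if `B > 0` a.s. and
`E[exp(λA − (λ²/2)B²)] ≤ 1` for every `λ ∈ ℝ`, then for every `δ ∈ (0, 1/e]` and
`β > 0`, `P(|A| ≥ √((B² + β)(2 + log(B²/β + 1)) log(1/δ))) ≤ δ`. -/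
theorem pena_klass_lai_self_normalized
    {Ω : Type*} [MeasurableSpace Ω] (μ : Measure Ω) [IsProbabilityMeasure μ]
    (A B : Ω → ℝ) (hA : Measurable A) (hB : Measurable B)
    (hBpos : ∀ᵐ ω ∂μ, 0 < B ω)
    (hexp : ∀ l : ℝ,
      ∫⁻ ω, ENNReal.ofReal (Real.exp (l * A ω - l ^ 2 / 2 * (B ω) ^ 2)) ∂μ ≤ 1)
    (δ β : ℝ) (hδ0 : 0 < δ) (hδ1 : δ ≤ (Real.exp 1)⁻¹) (hβ : 0 < β) :
    μ {ω | Real.sqrt (((B ω) ^ 2 + β) * (2 + Real.log ((B ω) ^ 2 / β + 1)) *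
        Real.log (1 / δ)) ≤ |A ω|} ≤ ENNReal.ofReal δ :=
  pena_klass_lai_self_normalized_general μ A B hA hB hexp δ β hδ0 hδ1 hβ
end

section
/- Supermartingale lemma (van de Geer): under the martingale setup with predictable bounds, for every λ ∈ ℝ the process j ↦ exp( λ·M_j − (λ²/8)·U_j² ), j = 0,1,…,k, is a supermartingale with respect to the filtration (ℱ_j). -/
open MeasureTheory ProbabilityTheory Real

/-!
Each factor `exp (λ X_i - λ² (D_i - C_i)² / 8)` has conditional expectation at most `1` given
`ℱ_{i-1}`. Conditionally on `ℱ_{i-1}`, `exp (λ X_i)` lies below the chord of `exp (λ ·)` over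
`[C_i, D_i]`, which is affine in `X_i` with `ℱ_{i-1}`-measurable coefficients; since `X_i` has
conditional mean zero, the conditional expectation of the chord is its value at `0`, and
Hoeffding's lemma bounds that value by `exp (λ² (D_i - C_i)² / 8)`. The process is the product of
these factors, so it is a supermartingale.
-/

noncomputable def expChord (t c d x : ℝ) : ℝ :=
  ((d - x) * exp (t * c) + (x - c) * exp (t * d)) / (d - c)

lemma expChord_eq_add_mul (t c d x : ℝ) :
    expChord t c d x = expChord t c d 0 + (exp (t * d) - exp (t * c)) / (d - c) * x := by
  unfold expChord
  ring

lemma expChord_nonneg {t c d x : ℝ} (hcx : c ≤ x) (hxd : x ≤ d) : 0 ≤ expChord t c d x := by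
  unfold expChord
  have := exp_pos (t * c)
  have := exp_pos (t * d)
  exact div_nonneg (by nlinarith) (by linarith)

lemma exp_mul_le_expChord {t c d x : ℝ} (hcx : c ≤ x) (hxd : x ≤ d) (hcd : c < d) :
    exp (t * x) ≤ expChord t c d x := by
  have hdc : 0 < d - c := sub_pos.2 hcd
  have h := convexOn_exp.2 (Set.mem_univ (t * c)) (Set.mem_univ (t * d))
    (div_nonneg (sub_nonneg.2 hxd) hdc.le) (div_nonneg (sub_nonneg.2 hcx) hdc.le)
    (by field_simp; ring)
  simp only [smul_eq_mul] at h
  have hx : (d - x) / (d - c) * (t * c) + (x - c) / (d - c) * (t * d) = t * x := by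
    field_simp
    ring
  rw [hx] at h
  refine h.trans_eq ?_
  unfold expChord
  field_simp

/-- Hoeffding's lemma for the centred law on `{c, d}`, whose moment generating function at `t` is
`expChord t c d 0`. -/
lemma expChord_zero_le {t c d : ℝ} (hc : c ≤ 0) (hd : 0 ≤ d) (hcd : c < d) :
    expChord t c d 0 ≤ exp (t ^ 2 * (d - c) ^ 2 / 8) := by
  have hdc : 0 < d - c := sub_pos.2 hcd
  have hp : 0 ≤ d / (d - c) := by positivity
  have hq : 0 ≤ -c / (d - c) := div_nonneg (by linarith) hdc.le
  set ν : Measure ℝ := ENNReal.ofReal (d / (d - c)) • Measure.dirac c +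
    ENNReal.ofReal (-c / (d - c)) • Measure.dirac d with hν
  have hν_integral (f : ℝ → ℝ) : ∫ x, f x ∂ν = d / (d - c) * f c + -c / (d - c) * f d := by
    rw [hν, integral_add_measure, integral_smul_measure, integral_smul_measure, integral_dirac,
      integral_dirac, ENNReal.toReal_ofReal hp, ENNReal.toReal_ofReal hq, smul_eq_mul, smul_eq_mul]
    all_goals exact (integrable_dirac (by simp)).smul_measure (by simp)
  have : IsProbabilityMeasure ν := by
    constructor
    simp only [hν, Measure.coe_add, Measure.coe_smul, Pi.add_apply, Pi.smul_apply, measure_univ,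
      smul_eq_mul, mul_one]
    rw [← ENNReal.ofReal_add hp hq, ← add_div, ← sub_eq_add_neg, div_self hdc.ne',
      ENNReal.ofReal_one]
  have hν_Icc : ∀ᵐ x ∂ν, x ∈ Set.Icc c d := by
    rw [hν, ae_add_measure_iff]
    exact ⟨Measure.ae_smul_measure ((ae_dirac_iff measurableSet_Icc).2 (by simp [hcd.le])) _,
      Measure.ae_smul_measure ((ae_dirac_iff measurableSet_Icc).2 (by simp [hcd.le])) _⟩
  have h := (hasSubgaussianMGF_of_mem_Icc_of_integral_eq_zero (X := fun x => x)
    measurable_id.aemeasurable hν_Icc (by rw [hν_integral]; field_simp; ring)).mgf_le t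
  rw [mgf, hν_integral] at h
  convert h using 1
  · unfold expChord
    field_simp
    ring_nf
  · rw [NNReal.coe_pow, NNReal.coe_div, coe_nnnorm, Real.norm_of_nonneg hdc.le]
    norm_num
    ring_nf

lemma mul_sub_sq_div_eight_le_two {t x w : ℝ} (hx : |x| ≤ w) : t * x - t ^ 2 / 8 * w ^ 2 ≤ 2 := by
  have htx : t * x ≤ |t| * w := (le_abs_self _).trans <| by
    rw [abs_mul]; exact mul_le_mul_of_nonneg_left hx (abs_nonneg t)
  nlinarith [sq_nonneg (|t| * w - 4), sq_abs t]

lemma expChord_mul_le_exp_two {t c d x : ℝ} (hcx : c ≤ x) (hxd : x ≤ d) (hc : c ≤ 0)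
    (hd : 0 ≤ d) (hcd : c < d) : expChord t c d x * exp (-(t ^ 2 / 8 * (d - c) ^ 2)) ≤ exp 2 := by
  set q := exp (-(t ^ 2 / 8 * (d - c) ^ 2))
  have hend (y : ℝ) (hy : |y| ≤ d - c) : exp (t * y) * q ≤ exp 2 := by
    rw [← exp_add, exp_le_exp, ← sub_eq_add_neg]
    exact mul_sub_sq_div_eight_le_two hy
  have hc' := hend c (abs_le.2 ⟨by linarith, by linarith⟩)
  have hd' := hend d (abs_le.2 ⟨by linarith, by linarith⟩)
  have hdc : 0 < d - c := sub_pos.2 hcd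
  calc expChord t c d x * q
        = ((d - x) * (exp (t * c) * q) + (x - c) * (exp (t * d) * q)) / (d - c) := by
        unfold expChord; ring
    _ ≤ ((d - x) * exp 2 + (x - c) * exp 2) / (d - c) := by
        gcongr
    _ = exp 2 := by field_simp; ring

section ConditionalExpectation

variable {Ω : Type*} {m' m : MeasurableSpace Ω} {μ : Measure Ω}

lemma ae_nonneg_of_le_of_condExp_eq_zero (hm : m' ≤ m) [SigmaFinite (μ.trim hm)] {X D : Ω → ℝ}
    (hX : Integrable X μ) (hcond : μ[X|m'] =ᵐ[μ] 0) (hD : StronglyMeasurable[m'] D)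
    (hXD : ∀ᵐ ω ∂μ, X ω ≤ D ω) : ∀ᵐ ω ∂μ, 0 ≤ D ω := by
  set s := {ω | D ω < 0}
  have hs' : MeasurableSet[m'] s := measurableSet_lt hD.measurable measurable_const
  have hs : MeasurableSet s := hm _ hs'
  have hXs : ∀ᵐ ω ∂μ.restrict s, X ω < 0 := by
    filter_upwards [ae_restrict_of_ae hXD, ae_restrict_mem hs] with ω h hω using h.trans_lt hω
  have hint : ∫ ω in s, -X ω ∂μ = 0 := by
    rw [integral_neg, ← setIntegral_condExp hm hX hs', setIntegral_congr_ae hs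
      (hcond.mono fun ω h _ => h)]
    simp
  have hX0 : (fun ω => -X ω) =ᵐ[μ.restrict s] 0 :=
    (setIntegral_eq_zero_iff_of_nonneg_ae (hXs.mono fun ω h => by simpa using h.le)
      hX.neg.integrableOn).1 hint
  have hfalse : ∀ᵐ ω ∂μ.restrict s, False := by
    filter_upwards [hX0, hXs] with ω h1 h2
    simp only [Pi.zero_apply, neg_eq_zero] at h1
    exact h2.ne h1
  have hs0 : μ s = 0 := by simpa [ae_iff] using hfalse
  exact ae_iff.2 (by simpa [s, not_le] using hs0)

lemma ae_nonpos_and_nonneg_of_condExp_eq_zero (hm : m' ≤ m) [SigmaFinite (μ.trim hm)]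
    {X C D : Ω → ℝ} (hX : Integrable X μ) (hcond : μ[X|m'] =ᵐ[μ] 0) (hC : StronglyMeasurable[m'] C)
    (hD : StronglyMeasurable[m'] D) (hbounds : ∀ᵐ ω ∂μ, C ω ≤ X ω ∧ X ω ≤ D ω) :
    ∀ᵐ ω ∂μ, C ω ≤ 0 ∧ 0 ≤ D ω := by
  have hcond_neg : μ[-X|m'] =ᵐ[μ] 0 := by
    filter_upwards [condExp_neg X m', hcond] with ω h h0
    simp [h, h0]
  have hC0 := ae_nonneg_of_le_of_condExp_eq_zero hm hX.neg hcond_neg hC.neg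
    (hbounds.mono fun ω h => neg_le_neg h.1)
  have hD0 := ae_nonneg_of_le_of_condExp_eq_zero hm hX hcond hD (hbounds.mono fun ω h => h.2)
  filter_upwards [hC0, hD0] with ω hC0 hD0
  exact ⟨by simpa using hC0, hD0⟩

lemma condExp_le_of_le_add_mul (hm : m' ≤ m) [SigmaFinite (μ.trim hm)] {Z A B X : Ω → ℝ}
    (hZ : Integrable Z μ) (hA : StronglyMeasurable[m'] A) (hAint : Integrable A μ)
    (hB : StronglyMeasurable[m'] B) (hBX : Integrable (B * X) μ) (hX : Integrable X μ)
    (hcond : μ[X|m'] =ᵐ[μ] 0) (hle : Z ≤ᵐ[μ] A + B * X) : μ[Z|m'] ≤ᵐ[μ] A :=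
  calc μ[Z|m'] ≤ᵐ[μ] μ[A + B * X|m'] := condExp_mono hZ (hAint.add hBX) hle
    _ =ᵐ[μ] μ[A|m'] + μ[B * X|m'] := condExp_add hAint hBX m'
    _ =ᵐ[μ] A + B * μ[X|m'] := by
        rw [condExp_of_stronglyMeasurable hm hA hAint]
        exact Filter.EventuallyEq.rfl.add (condExp_mul_of_stronglyMeasurable_left hB hBX hX)
    _ =ᵐ[μ] A := by
        filter_upwards [hcond] with ω h
        simp [h]

lemma condExp_exp_mul_sub_sq_le_one [IsFiniteMeasure μ] (hm : m' ≤ m) {X C D : Ω → ℝ}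
    (hX : Integrable X μ) (hcond : μ[X|m'] =ᵐ[μ] 0) (hC : StronglyMeasurable[m'] C)
    (hD : StronglyMeasurable[m'] D) (hCD : ∀ᵐ ω ∂μ, C ω < D ω)
    (hbounds : ∀ᵐ ω ∂μ, C ω ≤ X ω ∧ X ω ≤ D ω) (t : ℝ) :
    μ[fun ω => exp (t * X ω - t ^ 2 / 8 * (D ω - C ω) ^ 2)|m'] ≤ᵐ[μ] 1 := by
  have hsign := ae_nonpos_and_nonneg_of_condExp_eq_zero hm hX hcond hC hD hbounds
  have hCm := hC.measurable
  have hDm := hD.measurable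
  set q : Ω → ℝ := fun ω => exp (-(t ^ 2 / 8 * (D ω - C ω) ^ 2))
  set A : Ω → ℝ := fun ω => expChord t (C ω) (D ω) 0 * q ω
  set B : Ω → ℝ := fun ω => (exp (t * D ω) - exp (t * C ω)) / (D ω - C ω) * q ω
  have hAm : StronglyMeasurable[m'] A := by
    refine Measurable.stronglyMeasurable ?_
    simp only [A, q, expChord]
    fun_prop
  have hBm : StronglyMeasurable[m'] B := by
    refine Measurable.stronglyMeasurable ?_
    simp only [B, q]
    fun_prop
  have hchord (ω : Ω) (x : ℝ) : A ω + B ω * x = expChord t (C ω) (D ω) x * q ω := by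
    simp only [A, B]
    rw [expChord_eq_add_mul t (C ω) (D ω) x]
    ring
  have hchord_bdd : ∀ᵐ ω ∂μ, ∀ x, C ω ≤ x → x ≤ D ω → ‖A ω + B ω * x‖ ≤ exp 2 := by
    filter_upwards [hsign, hCD] with ω ⟨hC0, hD0⟩ hCD x hCx hxD
    rw [hchord, Real.norm_of_nonneg (mul_nonneg (expChord_nonneg hCx hxD) (exp_pos _).le)]
    exact expChord_mul_le_exp_two hCx hxD hC0 hD0 hCD
  have hAint : Integrable A μ := Integrable.of_bound (hAm.mono hm).aestronglyMeasurable (exp 2)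
    (by filter_upwards [hchord_bdd, hsign] with ω h h0; simpa using h 0 h0.1 h0.2)
  have hABXint : Integrable (A + B * X) μ := Integrable.of_bound
    ((hAm.mono hm).aestronglyMeasurable.add ((hBm.mono hm).aestronglyMeasurable.mul
      hX.aestronglyMeasurable)) (exp 2)
    (by filter_upwards [hchord_bdd, hbounds] with ω h hX using h _ hX.1 hX.2)
  have hle : (fun ω => exp (t * X ω - t ^ 2 / 8 * (D ω - C ω) ^ 2)) ≤ᵐ[μ] A + B * X := by
    filter_upwards [hbounds, hCD] with ω hX hCD
    simp only [Pi.add_apply, Pi.mul_apply, hchord, q, sub_eq_add_neg, exp_add]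
    exact mul_le_mul_of_nonneg_right (exp_mul_le_expChord hX.1 hX.2 hCD) (exp_pos _).le
  have hZint : Integrable (fun ω => exp (t * X ω - t ^ 2 / 8 * (D ω - C ω) ^ 2)) μ := by
    refine Integrable.of_bound ?_ (exp 2) ?_
    · have := hX.aestronglyMeasurable
      have := (hC.mono hm).aestronglyMeasurable (μ := μ)
      have := (hD.mono hm).aestronglyMeasurable (μ := μ)
      fun_prop
    · filter_upwards [hle, hchord_bdd, hbounds] with ω hle h hX
      rw [Real.norm_of_nonneg (exp_pos _).le]
      exact hle.trans ((le_abs_self _).trans (h _ hX.1 hX.2))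
  calc μ[fun ω => exp (t * X ω - t ^ 2 / 8 * (D ω - C ω) ^ 2)|m'] ≤ᵐ[μ] A :=
        condExp_le_of_le_add_mul hm hZint hAm hAint hBm (by simpa using hABXint.sub hAint) hX
          hcond hle
    _ ≤ᵐ[μ] 1 := by
        filter_upwards [hsign, hCD] with ω ⟨hC0, hD0⟩ hCD
        calc A ω ≤ exp (t ^ 2 * (D ω - C ω) ^ 2 / 8) * q ω :=
              mul_le_mul_of_nonneg_right (expChord_zero_le hC0 hD0 hCD) (exp_pos _).le
          _ = 1 := by rw [← exp_add]; ring_nf; exact exp_zero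

end ConditionalExpectation

lemma supermartingale_prod_Icc_min {Ω : Type*} {m : MeasurableSpace Ω} {μ : Measure Ω}
    [IsFiniteMeasure μ] {ℱ : Filtration ℕ m} {k : ℕ} {Z : ℕ → Ω → ℝ} {M : ℝ}
    (hZm : ∀ i, 1 ≤ i → i ≤ k → StronglyMeasurable[ℱ i] (Z i))
    (hZ0 : ∀ i, 1 ≤ i → i ≤ k → 0 ≤ Z i)
    (hZM : ∀ i, 1 ≤ i → i ≤ k → ∀ᵐ ω ∂μ, Z i ω ≤ M)
    (hZcond : ∀ i, 1 ≤ i → i ≤ k → μ[Z i|ℱ (i - 1)] ≤ᵐ[μ] 1) :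
    Supermartingale (fun j ω => ∏ i ∈ Finset.Icc 1 (min j k), Z i ω) ℱ μ := by
  set Y : ℕ → Ω → ℝ := fun j ω => ∏ i ∈ Finset.Icc 1 (min j k), Z i ω
  have hY0 (j : ℕ) : 0 ≤ Y j := fun ω => Finset.prod_nonneg fun i hi => by
    obtain ⟨h1, hj⟩ := Finset.mem_Icc.1 hi
    exact hZ0 i h1 (hj.trans (min_le_right j k)) ω
  have hYm (j : ℕ) : StronglyMeasurable[ℱ j] (Y j) := by
    refine Finset.stronglyMeasurable_fun_prod _ fun i hi => ?_
    obtain ⟨h1, hj⟩ := Finset.mem_Icc.1 hi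
    exact (hZm i h1 (hj.trans (min_le_right j k))).mono (ℱ.mono (hj.trans (min_le_left j k)))
  have hZint (i : ℕ) (h1 : 1 ≤ i) (hk : i ≤ k) : Integrable (Z i) μ :=
    Integrable.of_bound ((hZm i h1 hk).mono (ℱ.le i)).aestronglyMeasurable M
      ((hZM i h1 hk).mono fun ω h => by rwa [Real.norm_of_nonneg (hZ0 i h1 hk ω)])
  have hYint (j : ℕ) : Integrable (Y j) μ := by
    refine Integrable.of_bound ((hYm j).mono (ℱ.le j)).aestronglyMeasurable
      (∏ _i ∈ Finset.Icc 1 (min j k), M) ?_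
    have hM : ∀ᵐ ω ∂μ, ∀ i ∈ Finset.Icc 1 (min j k), Z i ω ≤ M :=
      (Filter.eventually_all_finset _).2 fun i hi => by
        obtain ⟨h1, hj⟩ := Finset.mem_Icc.1 hi
        exact hZM i h1 (hj.trans (min_le_right j k))
    filter_upwards [hM] with ω hM
    rw [Real.norm_of_nonneg (hY0 j ω)]
    refine Finset.prod_le_prod (fun i hi => ?_) hM
    obtain ⟨h1, hj⟩ := Finset.mem_Icc.1 hi
    exact hZ0 i h1 (hj.trans (min_le_right j k)) ω
  refine supermartingale_nat hYm hYint fun j => ?_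
  rcases le_or_gt k j with hkj | hjk
  · have hY : Y (j + 1) = Y j := by
      simp only [Y, min_eq_right hkj, min_eq_right (hkj.trans j.le_succ)]
    rw [hY, condExp_of_stronglyMeasurable (ℱ.le j) (hYm j) (hYint j)]
  · have hY : Y (j + 1) = Y j * Z (j + 1) := by
      ext ω
      simp only [Y, min_eq_left hjk.le, min_eq_left (Nat.succ_le_of_lt hjk), Pi.mul_apply]
      exact Finset.prod_Icc_succ_top (Nat.le_add_left 1 j) _
    rw [hY]
    filter_upwards [condExp_mul_of_stronglyMeasurable_left (hYm j) (hY ▸ hYint (j + 1))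
      (hZint (j + 1) (Nat.le_add_left 1 j) hjk), hZcond (j + 1) (Nat.le_add_left 1 j) hjk]
      with ω h hZ
    rw [h, Pi.mul_apply]
    exact mul_le_of_le_one_right (hY0 j ω) hZ

/-- Supermartingale lemma (van de Geer): in the martingale setup with predictable
bounds `C_i ≤ X_i ≤ D_i`, for every `λ ∈ ℝ` the process
`j ↦ exp(λ·M_j − (λ²/8)·U_j²)`, for `j = 0, 1, …, k` (frozen after time `k`), is a
supermartingale. Here `M_j = Σ_{i=1}^j X_i` and `U_j² = Σ_{i=1}^j (D_i − C_i)²`. -/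
theorem vandegeer_exponential_supermartingale
    {Ω : Type*} {m : MeasurableSpace Ω} (μ : Measure Ω) [IsProbabilityMeasure μ]
    (k : ℕ) (ℱ : Filtration ℕ m) (X C D : ℕ → Ω → ℝ)
    (hXint : ∀ i, 1 ≤ i → i ≤ k → Integrable (X i) μ)
    (hXmeas : ∀ i, 1 ≤ i → i ≤ k → StronglyMeasurable[ℱ i] (X i))
    (hcond : ∀ i, 1 ≤ i → i ≤ k → μ[X i|ℱ (i - 1)] =ᵐ[μ] 0)
    (hCmeas : ∀ i, 1 ≤ i → i ≤ k → StronglyMeasurable[ℱ (i - 1)] (C i))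
    (hDmeas : ∀ i, 1 ≤ i → i ≤ k → StronglyMeasurable[ℱ (i - 1)] (D i))
    (hCltD : ∀ i, 1 ≤ i → i ≤ k → ∀ᵐ ω ∂μ, C i ω < D i ω)
    (hbounds : ∀ i, 1 ≤ i → i ≤ k → ∀ᵐ ω ∂μ, C i ω ≤ X i ω ∧ X i ω ≤ D i ω)
    (l : ℝ) :
    Supermartingale
      (fun j ω => Real.exp (l * (∑ i ∈ Finset.Icc 1 (min j k), X i ω) -
        l ^ 2 / 8 * ∑ i ∈ Finset.Icc 1 (min j k), (D i ω - C i ω) ^ 2)) ℱ μ := by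
  have hprod : (fun j ω => exp (l * (∑ i ∈ Finset.Icc 1 (min j k), X i ω) -
      l ^ 2 / 8 * ∑ i ∈ Finset.Icc 1 (min j k), (D i ω - C i ω) ^ 2)) =
      fun j ω => ∏ i ∈ Finset.Icc 1 (min j k),
        exp (l * X i ω - l ^ 2 / 8 * (D i ω - C i ω) ^ 2) := by
    ext j ω
    rw [← exp_sum, Finset.sum_sub_distrib, Finset.mul_sum, Finset.mul_sum]
  have hprev (i : ℕ) : ℱ (i - 1) ≤ ℱ i := ℱ.mono (Nat.sub_le i 1)
  rw [hprod]
  refine supermartingale_prod_Icc_min (M := exp 2) (fun i h1 hk => ?_)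
    (fun i _ _ ω => (exp_pos _).le) (fun i h1 hk => ?_) (fun i h1 hk =>
      condExp_exp_mul_sub_sq_le_one (ℱ.le _) (hXint i h1 hk) (hcond i h1 hk) (hCmeas i h1 hk)
        (hDmeas i h1 hk) (hCltD i h1 hk) (hbounds i h1 hk) l)
  · have := (hXmeas i h1 hk).measurable
    have := ((hCmeas i h1 hk).mono (hprev i)).measurable
    have := ((hDmeas i h1 hk).mono (hprev i)).measurable
    exact Measurable.stronglyMeasurable (by fun_prop)
  · filter_upwards [hbounds i h1 hk, ae_nonpos_and_nonneg_of_condExp_eq_zero (ℱ.le _)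
      (hXint i h1 hk) (hcond i h1 hk) (hCmeas i h1 hk) (hDmeas i h1 hk) (hbounds i h1 hk)]
      with ω hX hCD
    exact exp_le_exp.2 (mul_sub_sq_div_eight_le_two (abs_le.2 ⟨by linarith, by linarith⟩))
end
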